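/- arXiv:math/0605026 — 6 statements merged into one kernel-verified Lean document; each statement's English description precedes it below -/
import Mathlib

section
/- Let α_1,…,α_k ∈ D \ {0}, let s be a nonnegative integer and s_1,…,s_k positive integers, and set n = s + s_1 + ⋯ + s_k. Let 0 < c < 2^{−2n} and define h(z) = (−1)^n c ∏_{j=1}^k (1 + conj(α_j))^{2 s_j} / (1 − conj(α_j) z)^{s_j}. Then for every z on the unit circle ∂D with z ≠ 1 and z ≠ (1 + α_j)/(1 + conj(α_j)) for all j, the strict inequality |z^s ∏_{j=1}^k (z − α_j)^{s_j} + h(z) (z − 1)^{2s+1} ∏_{j=1}^k (z − (1 + α_j)/(1 + conj(α_j)))^{2 s_j}| < |z^s ∏_{j=1}^k (z − α_j)^{s_j}| holds. -/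
/-!
On the unit circle every chord `w = (1 + ᾱ) z - (1 + α) = (1 + ᾱ)(z - τ)`, `τ = (1 + α)/(1 + ᾱ)`,
satisfies `w = -z w̄`, hence `w² = -z |w|²`; together with `z / (1 - ᾱ z) = (z - α)/|z - α|²`
this gives `(1 + ᾱ)² (z - τ)² / (1 - ᾱ z) = -ρ² (z - α)` with `ρ = |w| / |z - α|`
(`chordRatio α z`) in `(0, 2]`, and likewise `(z - 1)² = -z |z - 1|²`. All signs cancel, so the left-hand side equals
`P(z) (1 + t (z - 1))` with `P(z) = z^s ∏ (z - α_j)^{s_j}` and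
`t = c (|z - 1|^s ∏ ρ_j^{s_j})²`, `0 < t ≤ c 4^n < 1`. Finally `1 + t (z - 1)` is an interior
point of the chord from `1` to `z`, which lies strictly inside the disc.
-/

open Metric Complex ComplexConjugate

variable {z : ℂ}

lemma norm_one_add_mul_sub_one_lt_one (hz : ‖z‖ = 1) (hz1 : z ≠ 1) {t : ℝ} (ht0 : 0 < t)
    (ht1 : t < 1) : ‖1 + t * (z - 1)‖ < 1 := by
  have hcombo : 1 + t * (z - 1) = (1 - t) • (1 : ℂ) + t • z := by
    rw [real_smul, real_smul, ofReal_sub, ofReal_one]; ring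
  rw [hcombo]
  exact norm_combo_lt_of_ne norm_one.le hz.le (Ne.symm hz1) (sub_pos.2 ht1) ht0
    (sub_add_cancel 1 t)

lemma mul_conj_eq_one (hz : ‖z‖ = 1) : z * conj z = 1 := by
  rw [mul_conj', hz, ofReal_one, one_pow]

lemma chord_eq_sub_mul_conj (hz : ‖z‖ = 1) (α : ℂ) :
    (1 + conj α) * z - (1 + α) = (z - α) - z * conj (z - α) := by
  rw [map_sub]
  linear_combination mul_conj_eq_one hz

lemma sq_chord_eq (hz : ‖z‖ = 1) (α : ℂ) :
    ((1 + conj α) * z - (1 + α)) ^ 2 = -(z * ‖(1 + conj α) * z - (1 + α)‖ ^ 2) := by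
  rw [chord_eq_sub_mul_conj hz, ← mul_conj']
  -- `w = u - z ū` is fixed by `w ↦ -z w̄`, so `w² = -z w w̄`.
  generalize z - α = u
  rw [map_sub, map_mul, conj_conj]
  linear_combination (-(u - z * conj u) * u) * mul_conj_eq_one hz

lemma norm_chord_le (hz : ‖z‖ = 1) (α : ℂ) :
    ‖(1 + conj α) * z - (1 + α)‖ ≤ 2 * ‖z - α‖ := by
  rw [chord_eq_sub_mul_conj hz]
  calc ‖(z - α) - z * conj (z - α)‖ ≤ ‖z - α‖ + ‖z * conj (z - α)‖ := norm_sub_le _ _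
    _ = 2 * ‖z - α‖ := by rw [norm_mul, hz, one_mul, norm_conj]; ring

lemma div_one_sub_conj_mul (hz : ‖z‖ = 1) (α : ℂ) :
    z / (1 - conj α * z) = (z - α) / ‖z - α‖ ^ 2 := by
  have hz0 : z ≠ 0 := norm_ne_zero_iff.1 (by rw [hz]; exact one_ne_zero)
  have h1 : 1 - conj α * z = z * conj (z - α) := by
    rw [map_sub]; linear_combination -mul_conj_eq_one hz
  rw [h1, div_mul_cancel_left₀ hz0, ← mul_conj']
  rcases eq_or_ne (z - α) 0 with h | h
  · simp [h]
  · exact (div_mul_cancel_left₀ h _).symm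

lemma one_add_conj_ne_zero {α : ℂ} (hα : ‖α‖ < 1) : 1 + conj α ≠ 0 := fun h => by
  rw [← norm_conj, eq_neg_of_add_eq_zero_right h, norm_neg, norm_one] at hα
  exact lt_irrefl _ hα

noncomputable def chordRatio (α z : ℂ) : ℝ := ‖(1 + conj α) * z - (1 + α)‖ / ‖z - α‖

lemma chordRatio_nonneg (α z : ℂ) : 0 ≤ chordRatio α z :=
  div_nonneg (norm_nonneg _) (norm_nonneg _)

lemma chordRatio_le_two (hz : ‖z‖ = 1) (α : ℂ) : chordRatio α z ≤ 2 :=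
  div_le_of_le_mul₀ (norm_nonneg _) zero_le_two (norm_chord_le hz α)

lemma chordRatio_pos {α : ℂ} (hα : 1 + conj α ≠ 0) (hzα : z ≠ α)
    (hzτ : z ≠ (1 + α) / (1 + conj α)) : 0 < chordRatio α z := by
  refine div_pos (norm_pos_iff.2 fun h => hzτ ?_) (norm_pos_iff.2 (sub_ne_zero.2 hzα))
  rw [eq_div_iff hα]
  linear_combination h

lemma perturbation_factor_eq (hz : ‖z‖ = 1) {α : ℂ} (hα : 1 + conj α ≠ 0) :
    (1 + conj α) ^ 2 / (1 - conj α * z) * (z - (1 + α) / (1 + conj α)) ^ 2 =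
      -((chordRatio α z ^ 2 : ℝ) : ℂ) * (z - α) := by
  have hchord : (1 + conj α) * (z - (1 + α) / (1 + conj α)) = (1 + conj α) * z - (1 + α) := by
    field_simp
  calc (1 + conj α) ^ 2 / (1 - conj α * z) * (z - (1 + α) / (1 + conj α)) ^ 2
      = ((1 + conj α) * z - (1 + α)) ^ 2 / (1 - conj α * z) := by
        rw [← hchord]; ring
    _ = -‖(1 + conj α) * z - (1 + α)‖ ^ 2 * (z / (1 - conj α * z)) := by
        rw [sq_chord_eq hz]; ring
    _ = -((chordRatio α z ^ 2 : ℝ) : ℂ) * (z - α) := by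
        rw [div_one_sub_conj_mul hz, chordRatio]; push_cast; ring

lemma perturbation_factor_pow_eq (hz : ‖z‖ = 1) {α : ℂ} (hα : 1 + conj α ≠ 0) (m : ℕ) :
    (1 + conj α) ^ (2 * m) / (1 - conj α * z) ^ m * (z - (1 + α) / (1 + conj α)) ^ (2 * m) =
      (-1) ^ m * ((chordRatio α z ^ m) ^ 2 : ℝ) * (z - α) ^ m := by
  rw [pow_mul, pow_mul, ← div_pow, ← mul_pow, perturbation_factor_eq hz hα, neg_mul, neg_pow,
    mul_pow]
  push_cast
  ring

lemma sub_one_pow_two_mul_add_one_eq (hz : ‖z‖ = 1) (s : ℕ) :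
    (z - 1) ^ (2 * s + 1) = (-1) ^ s * z ^ s * ((‖z - 1‖ ^ s) ^ 2 : ℝ) * (z - 1) := by
  have hsq : (z - 1) ^ 2 = -(z * ‖z - 1‖ ^ 2) := by simpa using sq_chord_eq hz 0
  rw [pow_succ, pow_mul, hsq]
  push_cast
  ring

lemma perturbation_eq (hz : ‖z‖ = 1) {ι : Type*} [Fintype ι] (α : ι → ℂ)
    (hα : ∀ j, 1 + conj (α j) ≠ 0) (s : ℕ) (sj : ι → ℕ) (c : ℝ) :
    z ^ s * ∏ j, (z - α j) ^ sj j +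
        ((-1) ^ (s + ∑ j, sj j) * (c : ℂ) *
            ∏ j, (1 + conj (α j)) ^ (2 * sj j) / (1 - conj (α j) * z) ^ sj j) *
          ((z - 1) ^ (2 * s + 1) * ∏ j, (z - (1 + α j) / (1 + conj (α j))) ^ (2 * sj j)) =
      (z ^ s * ∏ j, (z - α j) ^ sj j) *
        (1 + (c * (‖z - 1‖ ^ s * ∏ j, chordRatio (α j) z ^ sj j) ^ 2 : ℝ) * (z - 1)) := by
  have hprod : (∏ j, (1 + conj (α j)) ^ (2 * sj j) / (1 - conj (α j) * z) ^ sj j) *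
        ∏ j, (z - (1 + α j) / (1 + conj (α j))) ^ (2 * sj j) =
      (-1) ^ (∑ j, sj j) * ((∏ j, chordRatio (α j) z ^ sj j) ^ 2 : ℝ) *
        ∏ j, (z - α j) ^ sj j := by
    rw [← Finset.prod_mul_distrib,
      Finset.prod_congr rfl fun j _ => perturbation_factor_pow_eq hz (hα j) (sj j),
      Finset.prod_mul_distrib, Finset.prod_mul_distrib, Finset.prod_pow_eq_pow_sum]
    push_cast
    rw [Finset.prod_pow]
  have hsign : ((-1 : ℂ)) ^ (s + ∑ j, sj j) * (-1) ^ s * (-1) ^ (∑ j, sj j) = 1 := by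
    rw [← pow_add, ← pow_add]
    exact Even.neg_one_pow ⟨s + ∑ j, sj j, by ring⟩
  calc _ = z ^ s * ∏ j, (z - α j) ^ sj j + (-1) ^ (s + ∑ j, sj j) * (c : ℂ) *
          ((z - 1) ^ (2 * s + 1) *
            ((∏ j, (1 + conj (α j)) ^ (2 * sj j) / (1 - conj (α j) * z) ^ sj j) *
              ∏ j, (z - (1 + α j) / (1 + conj (α j))) ^ (2 * sj j))) := by ring
    _ = _ := by
      rw [hprod, sub_one_pow_two_mul_add_one_eq hz]
      push_cast
      linear_combination (c * z ^ s * (‖z - 1‖ ^ s) ^ 2 * (z - 1) *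
        (∏ j, (chordRatio (α j) z : ℂ) ^ sj j) ^ 2 * ∏ j, (z - α j) ^ sj j) * hsign

lemma norm_sub_one_pow_mul_prod_chordRatio_le (hz : ‖z‖ = 1) {ι : Type*} [Fintype ι]
    (α : ι → ℂ) (s : ℕ) (sj : ι → ℕ) :
    ‖z - 1‖ ^ s * ∏ j, chordRatio (α j) z ^ sj j ≤ 2 ^ (s + ∑ j, sj j) := by
  rw [pow_add, ← Finset.prod_pow_eq_pow_sum]
  have hnonneg (j) : 0 ≤ chordRatio (α j) z ^ sj j := pow_nonneg (chordRatio_nonneg _ _) _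
  gcongr with j
  · exact Finset.prod_nonneg fun j _ => hnonneg j
  · exact (norm_sub_le z 1).trans (by rw [hz, norm_one]; norm_num)
  · exact fun j _ => hnonneg j
  · exact chordRatio_nonneg _ _
  · exact chordRatio_le_two hz _

theorem strict_boundary_inequality_general
    (k : ℕ) (α : Fin k → ℂ) (hα : ∀ j, α j ∈ ball (0 : ℂ) 1 \ {0})
    (s : ℕ) (sj : Fin k → ℕ)
    (c : ℝ) (hc0 : 0 < c) (hc1 : c < ((2 : ℝ) ^ (2 * (s + ∑ j, sj j)))⁻¹)
    (z : ℂ) (hz : z ∈ sphere (0 : ℂ) 1) (hz1 : z ≠ 1)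
    (hzτ : ∀ j, z ≠ (1 + α j) / (1 + (starRingEnd ℂ) (α j))) :
    ‖z ^ s * ∏ j, (z - α j) ^ sj j +
        ((-1) ^ (s + ∑ j, sj j) * (c : ℂ) *
            ∏ j, (1 + (starRingEnd ℂ) (α j)) ^ (2 * sj j) /
              (1 - (starRingEnd ℂ) (α j) * z) ^ sj j) *
          ((z - 1) ^ (2 * s + 1) *
            ∏ j, (z - (1 + α j) / (1 + (starRingEnd ℂ) (α j))) ^ (2 * sj j))‖ <
      ‖z ^ s * ∏ j, (z - α j) ^ sj j‖ := by
  have hz' : ‖z‖ = 1 := by simpa using hz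
  have hα1 (j) : ‖α j‖ < 1 := by simpa using (hα j).1
  have hzα (j) : z ≠ α j := fun h => by rw [h] at hz'; exact (hα1 j).ne hz'
  set M := ‖z - 1‖ ^ s * ∏ j, chordRatio (α j) z ^ sj j
  have hM0 : 0 < M := mul_pos (pow_pos (norm_pos_iff.2 (sub_ne_zero.2 hz1)) s)
    (Finset.prod_pos fun j _ => pow_pos
      (chordRatio_pos (one_add_conj_ne_zero (hα1 j)) (hzα j) (hzτ j)) _)
  have hcM : c * M ^ 2 < 1 := by
    have h2M : M ^ 2 ≤ 2 ^ (2 * (s + ∑ j, sj j)) := by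
      rw [pow_mul']
      exact pow_le_pow_left₀ hM0.le (norm_sub_one_pow_mul_prod_chordRatio_le hz' α s sj) 2
    calc c * M ^ 2 ≤ c * 2 ^ (2 * (s + ∑ j, sj j)) := by gcongr
      _ < 1 := by rwa [← lt_div_iff₀ (by positivity), one_div]
  have hP : z ^ s * ∏ j, (z - α j) ^ sj j ≠ 0 :=
    mul_ne_zero (pow_ne_zero _ (ne_zero_of_norm_ne_zero (hz'.trans_ne one_ne_zero)))
      (Finset.prod_ne_zero_iff.2 fun j _ => pow_ne_zero _ (sub_ne_zero.2 (hzα j)))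
  rw [perturbation_eq hz' α (fun j => one_add_conj_ne_zero (hα1 j)), norm_mul]
  exact mul_lt_of_lt_one_right (norm_pos_iff.2 hP)
    (norm_one_add_mul_sub_one_lt_one hz' hz1 (by positivity) hcM)

/-- **Proposition (strict boundary inequality).** For `α j ∈ D \ {0}`, `s ≥ 0`,
`s j ≥ 1`, `n = s + ∑ s j`, `0 < c < 2^(-2n)` and
`h(z) = (-1)^n c ∏ (1 + conj α j)^(2 s j) / (1 - conj α j · z)^(s j)`, the strict
inequality
`|z^s ∏ (z - α j)^(s j) + h(z) (z-1)^(2s+1) ∏ (z - (1+α j)/(1+conj α j))^(2 s j)|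
  < |z^s ∏ (z - α j)^(s j)|`
holds for every `z` on the unit circle other than `1` and the points
`(1 + α j)/(1 + conj α j)`. -/
theorem strict_boundary_inequality
    (k : ℕ) (α : Fin k → ℂ) (hα : ∀ j, α j ∈ ball (0 : ℂ) 1 \ {0})
    (s : ℕ) (sj : Fin k → ℕ) (hsj : ∀ j, 0 < sj j)
    (c : ℝ) (hc0 : 0 < c) (hc1 : c < ((2 : ℝ) ^ (2 * (s + ∑ j, sj j)))⁻¹)
    (z : ℂ) (hz : z ∈ sphere (0 : ℂ) 1) (hz1 : z ≠ 1)
    (hzτ : ∀ j, z ≠ (1 + α j) / (1 + (starRingEnd ℂ) (α j))) :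
    ‖z ^ s * ∏ j, (z - α j) ^ sj j +
        ((-1) ^ (s + ∑ j, sj j) * (c : ℂ) *
            ∏ j, (1 + (starRingEnd ℂ) (α j)) ^ (2 * sj j) /
              (1 - (starRingEnd ℂ) (α j) * z) ^ sj j) *
          ((z - 1) ^ (2 * s + 1) *
            ∏ j, (z - (1 + α j) / (1 + (starRingEnd ℂ) (α j))) ^ (2 * sj j))‖ <
      ‖z ^ s * ∏ j, (z - α j) ^ sj j‖ :=
  strict_boundary_inequality_general k α hα s sj c hc0 hc1 z hz hz1 hzτ
end

section
/- Let α_1,…,α_k ∈ D \ {0}, let s be a nonnegative integer and s_1,…,s_k positive integers, set n = s + s_1 + ⋯ + s_k, and let 0 < c < 2^{−2n}. For α ∈ D let γ_α(z) = (z − α)/(1 − conj(α) z) denote the Möbius automorphism of D. Then for every z on the unit circle ∂D, |z^s ∏_{j=1}^k γ_{α_j}(z)^{s_j} + (−1)^n c (z − 1)^{2s+1} ∏_{j=1}^k (γ_{α_j}(z) − 1)^{2 s_j}| ≤ |z^s ∏_{j=1}^k γ_{α_j}(z)^{s_j}| = 1. -/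
/-!
On the unit circle `(w - 1) ^ 2 = -|w - 1| ^ 2 * w`. Hence, with `B = z ^ s * ∏ γ_j ^ s_j`, which is
unimodular, the perturbation term equals `c * T * (z - 1) * B` for the real number
`T = |z - 1| ^ (2 s) * ∏ |γ_j - 1| ^ (2 s_j) ∈ [0, 4 ^ n]`: the signs `(-1) ^ n` cancel exactly.
The sum is therefore `B * (1 + t * (z - 1))` with `t = c * T ∈ [0, 1]`, and `1 + t * (z - 1)` lies on
the segment from `1` to `z`, inside the closed unit disc.
-/

open Metric ComplexConjugate Finset

namespace Complex

theorem norm_sub_div_one_sub_conj_mul_eq_one {α z : ℂ} (hα : α ∈ ball (0 : ℂ) 1)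
    (hz : z ∈ sphere (0 : ℂ) 1) : ‖(z - α) / (1 - conj α * z)‖ = 1 := by
  have h := norm_canonicalFactor_eval_circle_eq_one hα hz
  rw [canonicalFactor_apply, ofReal_one, one_pow, one_mul] at h
  rw [← inv_div, norm_inv, h, inv_one]

section UnitCircle

variable {w : ℂ}

theorem sub_one_sq_of_norm_eq_one (hw : ‖w‖ = 1) : (w - 1) ^ 2 = -(‖w - 1‖ : ℂ) ^ 2 * w := by
  have hconj : conj w * w = 1 := by rw [conj_mul', hw]; norm_num
  rw [← conj_mul', map_sub, map_one]
  linear_combination (w - 1) * hconj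

theorem sub_one_pow_two_mul_of_norm_eq_one (hw : ‖w‖ = 1) (m : ℕ) :
    (w - 1) ^ (2 * m) = (-1) ^ m * (‖w - 1‖ : ℂ) ^ (2 * m) * w ^ m := by
  rw [pow_mul, pow_mul, sub_one_sq_of_norm_eq_one hw]
  ring

theorem norm_sub_one_le_two (hw : ‖w‖ ≤ 1) : ‖w - 1‖ ≤ 2 :=
  (norm_sub_le w 1).trans (by rw [norm_one]; linarith)

theorem norm_sub_one_pow_two_mul_le (hw : ‖w‖ ≤ 1) (m : ℕ) : ‖w - 1‖ ^ (2 * m) ≤ 4 ^ m := by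
  rw [pow_mul, show (4 : ℝ) = 2 ^ 2 by norm_num]
  gcongr
  exact norm_sub_one_le_two hw

theorem norm_one_add_mul_sub_one_le_one (hw : ‖w‖ ≤ 1) {t : ℝ} (ht₀ : 0 ≤ t) (ht₁ : t ≤ 1) :
    ‖1 + t * (w - 1)‖ ≤ 1 := by
  have h := (convex_closedBall (0 : ℂ) 1).add_smul_sub_mem (x := 1) (y := w) (by simp)
    (by simpa using hw) ⟨ht₀, ht₁⟩
  simpa [real_smul] using h

end UnitCircle

variable {ι : Type*} [Fintype ι] {γ : ι → ℂ}

theorem prod_sub_one_pow_two_mul_of_norm_eq_one (hγ : ∀ i, ‖γ i‖ = 1) (m : ι → ℕ) :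
    ∏ i, (γ i - 1) ^ (2 * m i) =
      (-1) ^ (∑ i, m i) * (∏ i, (‖γ i - 1‖ : ℂ) ^ (2 * m i)) * ∏ i, γ i ^ m i := by
  rw [← prod_pow_eq_pow_sum, ← prod_mul_distrib, ← prod_mul_distrib]
  exact prod_congr rfl fun i _ ↦ sub_one_pow_two_mul_of_norm_eq_one (hγ i) (m i)

theorem prod_norm_sub_one_pow_two_mul_le (hγ : ∀ i, ‖γ i‖ ≤ 1) (m : ι → ℕ) :
    ∏ i, ‖γ i - 1‖ ^ (2 * m i) ≤ 4 ^ (∑ i, m i) := by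
  rw [← prod_pow_eq_pow_sum]
  exact prod_le_prod (fun i _ ↦ by positivity) fun i _ ↦ norm_sub_one_pow_two_mul_le (hγ i) (m i)

variable {z : ℂ}

theorem pow_mul_prod_add_perturbation_eq (hz : ‖z‖ = 1) (hγ : ∀ i, ‖γ i‖ = 1) (s : ℕ)
    (m : ι → ℕ) (c : ℝ) :
    z ^ s * ∏ i, γ i ^ m i +
        (-1) ^ (s + ∑ i, m i) * (c : ℂ) * (z - 1) ^ (2 * s + 1) * ∏ i, (γ i - 1) ^ (2 * m i) =
      (z ^ s * ∏ i, γ i ^ m i) *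
        (1 + (c * (‖z - 1‖ ^ (2 * s) * ∏ i, ‖γ i - 1‖ ^ (2 * m i)) : ℝ) * (z - 1)) := by
  have hsign : (-1 : ℂ) ^ (s + ∑ i, m i) * ((-1) ^ s * (-1) ^ ∑ i, m i) = 1 := by
    rw [← pow_add, ← pow_add]
    exact Even.neg_one_pow ⟨_, rfl⟩
  rw [pow_succ, sub_one_pow_two_mul_of_norm_eq_one hz, prod_sub_one_pow_two_mul_of_norm_eq_one hγ]
  push_cast
  linear_combination (c : ℂ) * (‖z - 1‖ : ℂ) ^ (2 * s) * (∏ i, (‖γ i - 1‖ : ℂ) ^ (2 * m i)) *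
    z ^ s * (∏ i, γ i ^ m i) * (z - 1) * hsign

end Complex

open Complex

theorem blaschke_boundary_inequality_general
    (k : ℕ) (α : Fin k → ℂ) (hα : ∀ j, α j ∈ ball (0 : ℂ) 1 \ {0})
    (s : ℕ) (sj : Fin k → ℕ)
    (c : ℝ) (hc0 : 0 < c) (hc1 : c < ((2 : ℝ) ^ (2 * (s + ∑ j, sj j)))⁻¹)
    (z : ℂ) (hz : z ∈ sphere (0 : ℂ) 1) :
    ‖z ^ s * ∏ j, ((z - α j) / (1 - (starRingEnd ℂ) (α j) * z)) ^ sj j +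
        (-1) ^ (s + ∑ j, sj j) * (c : ℂ) * (z - 1) ^ (2 * s + 1) *
          ∏ j, ((z - α j) / (1 - (starRingEnd ℂ) (α j) * z) - 1) ^ (2 * sj j)‖ ≤
      ‖z ^ s * ∏ j, ((z - α j) / (1 - (starRingEnd ℂ) (α j) * z)) ^ sj j‖ ∧
    ‖z ^ s * ∏ j, ((z - α j) / (1 - (starRingEnd ℂ) (α j) * z)) ^ sj j‖ = 1 := by
  have hz1 : ‖z‖ = 1 := mem_sphere_zero_iff_norm.mp hz
  have hγ : ∀ j, ‖(z - α j) / (1 - conj (α j) * z)‖ = 1 :=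
    fun j ↦ norm_sub_div_one_sub_conj_mul_eq_one (hα j).1 hz
  have hB : ‖z ^ s * ∏ j, ((z - α j) / (1 - conj (α j) * z)) ^ sj j‖ = 1 := by
    rw [norm_mul, norm_pow, hz1, one_pow, one_mul, norm_prod]
    simp only [norm_pow, hγ, one_pow, prod_const_one]
  refine ⟨?_, hB⟩
  rw [pow_mul_prod_add_perturbation_eq hz1 hγ, norm_mul, hB, one_mul]
  have hT : ‖z - 1‖ ^ (2 * s) * ∏ j, ‖(z - α j) / (1 - conj (α j) * z) - 1‖ ^ (2 * sj j) ≤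
      (2 : ℝ) ^ (2 * (s + ∑ j, sj j)) := by
    rw [show (2 : ℝ) ^ (2 * (s + ∑ j, sj j)) = 4 ^ s * 4 ^ ∑ j, sj j by
      rw [pow_mul, pow_add]; norm_num]
    gcongr
    · exact norm_sub_one_pow_two_mul_le hz1.le s
    · exact prod_norm_sub_one_pow_two_mul_le (fun j ↦ (hγ j).le) sj
  have hcT := mul_le_mul_of_nonneg_left hT hc0.le
  have hc : c * 2 ^ (2 * (s + ∑ j, sj j)) < 1 := by
    rwa [← lt_inv_mul_iff₀' (by positivity), mul_one]
  exact norm_one_add_mul_sub_one_le_one hz1.le (by positivity) (by linarith)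

/-- **Inequality (7) in the paper.** For `α j ∈ D \ {0}`, `s ≥ 0`, `s j ≥ 1`,
`n = s + ∑ s j`, `0 < c < 2^(-2n)`, and the Möbius automorphisms
`γ_α(z) = (z - α)/(1 - conj α · z)`, for every `z` on the unit circle one has
`|z^s ∏ γ_{α j}(z)^(s j) + (-1)^n c (z-1)^(2s+1) ∏ (γ_{α j}(z) - 1)^(2 s j)|
  ≤ |z^s ∏ γ_{α j}(z)^(s j)| = 1`. -/
theorem blaschke_boundary_inequality
    (k : ℕ) (α : Fin k → ℂ) (hα : ∀ j, α j ∈ ball (0 : ℂ) 1 \ {0})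
    (s : ℕ) (sj : Fin k → ℕ) (hsj : ∀ j, 0 < sj j)
    (c : ℝ) (hc0 : 0 < c) (hc1 : c < ((2 : ℝ) ^ (2 * (s + ∑ j, sj j)))⁻¹)
    (z : ℂ) (hz : z ∈ sphere (0 : ℂ) 1) :
    ‖z ^ s * ∏ j, ((z - α j) / (1 - (starRingEnd ℂ) (α j) * z)) ^ sj j +
        (-1) ^ (s + ∑ j, sj j) * (c : ℂ) * (z - 1) ^ (2 * s + 1) *
          ∏ j, ((z - α j) / (1 - (starRingEnd ℂ) (α j) * z) - 1) ^ (2 * sj j)‖ ≤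
      ‖z ^ s * ∏ j, ((z - α j) / (1 - (starRingEnd ℂ) (α j) * z)) ^ sj j‖ ∧
    ‖z ^ s * ∏ j, ((z - α j) / (1 - (starRingEnd ℂ) (α j) * z)) ^ sj j‖ = 1 :=
  blaschke_boundary_inequality_general k α hα s sj c hc0 hc1 z hz
end

section
/- If f is a holomorphic self-map of the open unit disc D (i.e., f : D → D holomorphic) satisfying f(z) = z + O(|z − 1|^4) as z → 1 within D, then f(z) = z for all z ∈ D. -/
/-!
With the Cayley transform `cayley w = (1 + w) / (1 - w)` of the disc onto the right half-plane,
put `v = cayley ∘ f - cayley`. Near `1`, `v = 2 (f z - z) / ((1 - f z)(1 - z)) = O(|z - 1|²)`.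
Since `Re (cayley ∘ f) ≥ 0` and `Re (cayley w) = (1 - |w|²) / |1 - w|²` vanishes on the unit circle
away from `1`, the minimum principle for `Re v` on the disc with a small disc around `1` removed
gives `Re v ≥ 0`. A holomorphic function with nonnegative real part satisfies the Harnack-type bound
`|v 0| (1 - |z|) ≤ 2 |v z|` (Schwarz's lemma), and `v x = o(1 - x)` along the radius forces
`v 0 = 0`. By the open mapping theorem `v ≡ 0`, and `f = id` since `cayley` is injective.
-/

open Metric Complex ComplexConjugate Filter Topology Asymptotics Set

noncomputable def cayley (w : ℂ) : ℂ := (1 + w) / (1 - w)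

lemma re_cayley (w : ℂ) : (cayley w).re = (1 - ‖w‖ ^ 2) / ‖1 - w‖ ^ 2 := by
  rw [cayley, div_re, ← add_div, ← normSq_eq_norm_sq, ← normSq_eq_norm_sq]
  congr 1
  simp only [add_re, one_re, sub_re, add_im, one_im, sub_im, normSq_apply]
  ring

lemma re_cayley_nonneg {w : ℂ} (hw : ‖w‖ ≤ 1) : 0 ≤ (cayley w).re := by
  rw [re_cayley]
  exact div_nonneg (by nlinarith [norm_nonneg w]) (sq_nonneg _)

lemma re_cayley_le {w : ℂ} {η : ℝ} (hw : ‖w‖ ≤ 1) (hη : 0 < η) (h : η ≤ ‖1 - w‖) :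
    (cayley w).re ≤ 2 * (1 - ‖w‖) / η ^ 2 := by
  rw [re_cayley]
  calc (1 - ‖w‖ ^ 2) / ‖1 - w‖ ^ 2 ≤ (1 - ‖w‖ ^ 2) / η ^ 2 := by
        gcongr
        nlinarith [norm_nonneg w]
    _ ≤ 2 * (1 - ‖w‖) / η ^ 2 := by
        gcongr
        nlinarith [norm_nonneg w]

lemma cayley_sub_cayley {a b : ℂ} (ha : a ≠ 1) (hb : b ≠ 1) :
    cayley a - cayley b = 2 * (a - b) / ((1 - a) * (1 - b)) := by
  have ha' := sub_ne_zero.2 ha.symm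
  have hb' := sub_ne_zero.2 hb.symm
  rw [cayley, cayley]
  field_simp
  ring

lemma cayley_injOn : InjOn cayley {1}ᶜ := fun a ha b hb hab => by
  have h := cayley_sub_cayley ha hb
  rw [hab, sub_self, eq_div_iff (mul_ne_zero (sub_ne_zero.2 (Ne.symm ha))
    (sub_ne_zero.2 (Ne.symm hb)))] at h
  linear_combination -h / 2

lemma norm_cayley_sub_cayley_le {a b : ℂ} (hb : b ≠ 1) (hab : 2 * ‖a - b‖ ≤ ‖1 - b‖) :
    ‖cayley a - cayley b‖ ≤ 4 * ‖a - b‖ / ‖1 - b‖ ^ 2 := by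
  have hb' : 0 < ‖1 - b‖ := norm_pos_iff.2 (sub_ne_zero.2 hb.symm)
  have ha : ‖1 - b‖ / 2 ≤ ‖1 - a‖ := by
    have := norm_sub_norm_le (1 - b) (a - b)
    rw [show (1 : ℂ) - b - (a - b) = 1 - a by ring] at this
    linarith
  have ha' : a ≠ 1 := by
    rintro rfl
    simp only [sub_self, norm_zero] at ha
    linarith
  rw [cayley_sub_cayley ha' hb, norm_div, norm_mul, norm_mul, Complex.norm_two]
  calc 2 * ‖a - b‖ / (‖1 - a‖ * ‖1 - b‖) ≤ 2 * ‖a - b‖ / (‖1 - b‖ / 2 * ‖1 - b‖) := by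
        gcongr
    _ = 4 * ‖a - b‖ / ‖1 - b‖ ^ 2 := by
        field_simp
        ring

lemma ne_one_of_mem_ball {w : ℂ} (hw : w ∈ ball (0 : ℂ) 1) : w ≠ 1 := by
  rintro rfl
  simp at hw

lemma differentiableOn_cayley : DifferentiableOn ℂ cayley {1}ᶜ :=
  (differentiableOn_const 1 |>.add differentiableOn_id).div
    (differentiableOn_const 1 |>.sub differentiableOn_id)
    fun _ hw => sub_ne_zero.2 (Ne.symm hw)

lemma norm_sub_lt_norm_add_conj {a b : ℂ} (ha : 0 < a.re) (hb : 0 < b.re) :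
    ‖a - b‖ < ‖a + conj b‖ := by
  rw [← sq_lt_sq₀ (norm_nonneg _) (norm_nonneg _), ← normSq_eq_norm_sq, ← normSq_eq_norm_sq]
  simp only [normSq_apply, sub_re, sub_im, add_re, add_im, conj_re, conj_im]
  nlinarith [mul_pos ha hb]

lemma norm_le_norm_add_ofReal {b : ℂ} (hb : 0 ≤ b.re) {t : ℝ} (ht : 0 ≤ t) : ‖b‖ ≤ ‖b + t‖ := by
  rw [← sq_le_sq₀ (norm_nonneg _) (norm_nonneg _), ← normSq_eq_norm_sq, ← normSq_eq_norm_sq]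
  simp only [normSq_apply, add_re, add_im, ofReal_re, ofReal_im]
  nlinarith [mul_nonneg hb ht]

lemma norm_mul_one_sub_norm_le_of_re_pos {w : ℂ → ℂ} (hw : DifferentiableOn ℂ w (ball 0 1))
    (hre : ∀ z ∈ ball (0 : ℂ) 1, 0 < (w z).re) {z : ℂ} (hz : z ∈ ball (0 : ℂ) 1) :
    ‖w 0‖ * (1 - ‖z‖) ≤ 2 * ‖w z‖ := by
  have hb := hre 0 (mem_ball_self one_pos)
  have hlt : ∀ ζ ∈ ball (0 : ℂ) 1, ‖w ζ - w 0‖ < ‖w ζ + conj (w 0)‖ := fun ζ hζ =>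
    norm_sub_lt_norm_add_conj (hre ζ hζ) hb
  have hden : ∀ ζ ∈ ball (0 : ℂ) 1, w ζ + conj (w 0) ≠ 0 := fun ζ hζ =>
    norm_pos_iff.1 ((norm_nonneg _).trans_lt (hlt ζ hζ))
  have hschwarz : ‖(w z - w 0) / (w z + conj (w 0))‖ ≤ ‖z‖ := by
    refine Complex.norm_le_norm_of_mapsTo_ball ((hw.sub_const _).div (hw.add_const _) hden)
      (fun ζ hζ => ?_) (by simp) (mem_ball_zero_iff.1 hz)
    rw [mem_closedBall_zero_iff, Pi.div_apply, norm_div]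
    exact div_le_one_of_le₀ (hlt ζ hζ).le (norm_nonneg _)
  rw [norm_div, div_le_iff₀ (norm_pos_iff.2 (hden z hz))] at hschwarz
  have h1 : ‖w 0‖ - ‖w z‖ ≤ ‖w z - w 0‖ := by
    rw [norm_sub_rev]; exact norm_sub_norm_le _ _
  have h2 : ‖w z + conj (w 0)‖ ≤ ‖w z‖ + ‖w 0‖ :=
    (norm_add_le _ _).trans_eq (by rw [RCLike.norm_conj])
  have hz1 : ‖z‖ < 1 := mem_ball_zero_iff.1 hz
  nlinarith [norm_nonneg (w z), norm_nonneg (w 0), norm_nonneg z]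

lemma norm_mul_one_sub_norm_le_of_re_nonneg {w : ℂ → ℂ} (hw : DifferentiableOn ℂ w (ball 0 1))
    (hre : ∀ z ∈ ball (0 : ℂ) 1, 0 ≤ (w z).re) {z : ℂ} (hz : z ∈ ball (0 : ℂ) 1) :
    ‖w 0‖ * (1 - ‖z‖) ≤ 2 * ‖w z‖ := by
  refine le_of_forall_pos_le_add fun ε hε => ?_
  have hshift := norm_mul_one_sub_norm_le_of_re_pos (hw.add_const ((ε / 2 : ℝ) : ℂ))
    (fun ζ hζ => by simp only [add_re, ofReal_re]; linarith [hre ζ hζ]) hz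
  have h0 := norm_le_norm_add_ofReal (hre 0 (mem_ball_self one_pos)) (half_pos hε).le
  have hz' : ‖w z + ((ε / 2 : ℝ) : ℂ)‖ ≤ ‖w z‖ + ε / 2 :=
    (norm_add_le _ _).trans_eq (by rw [norm_real, Real.norm_of_nonneg (half_pos hε).le])
  have hz1 : 0 ≤ 1 - ‖z‖ := by linarith [mem_ball_zero_iff.1 hz]
  nlinarith [mul_le_mul_of_nonneg_right h0 hz1]

lemma le_re_of_forall_mem_frontier_le_re {U : Set ℂ} (hU : Bornology.IsBounded U) {v : ℂ → ℂ}
    (hv : DiffContOnCl ℂ v U) {m : ℝ} (hm : ∀ w ∈ frontier U, m ≤ (v w).re) {z : ℂ}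
    (hz : z ∈ closure U) : m ≤ (v z).re := by
  have hexp : DiffContOnCl ℂ (fun w => exp (-v w)) U := ⟨hv.1.neg.cexp, hv.2.neg.cexp⟩
  have h := Complex.norm_le_of_forall_mem_frontier_norm_le hU hexp (C := Real.exp (-m))
    (fun w hw => by rw [norm_exp, neg_re, Real.exp_le_exp]; linarith [hm w hw]) hz
  rw [norm_exp, neg_re, Real.exp_le_exp] at h
  linarith

lemma re_nonneg_of_neg_re_cayley_le {v : ℂ → ℂ} (hv : DifferentiableOn ℂ v (ball 0 1))
    (hlow : ∀ w ∈ ball (0 : ℂ) 1, -(cayley w).re ≤ (v w).re)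
    (hlim : Tendsto v (𝓝[ball 0 1] 1) (𝓝 0)) {z : ℂ} (hz : z ∈ ball (0 : ℂ) 1) :
    0 ≤ (v z).re := by
  refine le_of_forall_pos_le_add fun a ha => ?_
  obtain ⟨η₀, hη₀, hsmall⟩ := Metric.tendsto_nhdsWithin_nhds.1 hlim a ha
  have hz1 : 0 < dist z 1 := dist_pos.2 (ne_one_of_mem_ball hz)
  obtain ⟨η, hη, hηη₀, hηz⟩ : ∃ η, 0 < η ∧ η < η₀ ∧ η < dist z 1 :=
    ⟨min η₀ (dist z 1) / 2, by positivity, by linarith [min_le_left η₀ (dist z 1)],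
      by linarith [min_le_right η₀ (dist z 1)]⟩
  have hzn : ‖z‖ < 1 := mem_ball_zero_iff.1 hz
  obtain ⟨r, hzr, hr1, hrη⟩ : ∃ r, ‖z‖ < r ∧ r < 1 ∧ 2 * (1 - r) / η ^ 2 ≤ a := by
    refine ⟨max ((1 + ‖z‖) / 2) (1 - a * η ^ 2 / 2), lt_max_of_lt_left (by linarith),
      max_lt (by linarith) (by nlinarith [mul_pos ha (pow_pos hη 2)]), ?_⟩
    rw [div_le_iff₀ (by positivity)]
    nlinarith [le_max_right ((1 + ‖z‖) / 2) (1 - a * η ^ 2 / 2)]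
  -- On `‖w‖ = r` the Cayley term is small; on the small circle around `1`, `v` itself is small.
  set Ω := ball (0 : ℂ) r \ closedBall 1 η
  have hcl : closure Ω ⊆ closedBall 0 r ∩ (ball 1 η)ᶜ :=
    closure_minimal
      (fun w hw => ⟨ball_subset_closedBall hw.1, fun h => hw.2 (ball_subset_closedBall h)⟩)
      (isClosed_closedBall.inter isOpen_ball.isClosed_compl)
  have hclD : closure Ω ⊆ ball 0 1 := fun w hw =>
    mem_ball_zero_iff.2 ((mem_closedBall_zero_iff.1 (hcl hw).1).trans_lt hr1)
  have hfront : ∀ w ∈ frontier Ω, -a ≤ (v w).re := by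
    intro w hw
    obtain ⟨hwr, hwη⟩ := hcl hw.1
    have hwD := hclD hw.1
    have hwΩ : w ∉ Ω := by
      rw [frontier, (isOpen_ball.sdiff isClosed_closedBall).interior_eq] at hw
      exact hw.2
    by_cases hw' : w ∈ ball (0 : ℂ) r
    · have hwη' : dist w 1 ≤ η := by simpa using fun h => hwΩ ⟨hw', h⟩
      have := hsmall hwD (hwη'.trans_lt hηη₀)
      rw [dist_zero_right] at this
      linarith [neg_le_abs (v w).re, abs_re_le_norm (v w)]
    · have hrw : r ≤ ‖w‖ := by simpa using hw'
      have hwη'' : η ≤ ‖1 - w‖ := by simpa [dist_eq_norm, norm_sub_rev] using hwη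
      have := re_cayley_le (mem_ball_zero_iff.1 hwD).le hη hwη''
      have : 2 * (1 - ‖w‖) / η ^ 2 ≤ 2 * (1 - r) / η ^ 2 := by gcongr
      linarith [hlow w hwD]
  have hzΩ : z ∈ Ω := ⟨mem_ball_zero_iff.2 hzr, by simpa using hηz⟩
  linarith [le_re_of_forall_mem_frontier_le_re (isBounded_ball.subset sdiff_subset)
    (hv.mono hclD).diffContOnCl hfront (subset_closure hzΩ)]

lemma eqOn_zero_of_re_nonneg_of_eq_zero {U : Set ℂ} {v : ℂ → ℂ} (hU : IsOpen U)
    (hU' : IsPreconnected U) (hv : DifferentiableOn ℂ v U) (hre : ∀ z ∈ U, 0 ≤ (v z).re)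
    {c : ℂ} (hc : c ∈ U) (hvc : v c = 0) : EqOn v 0 U := by
  rcases (hv.analyticOnNhd hU).is_constant_or_isOpen hU' with ⟨w, hw⟩ | hopen
  · intro z hz
    rw [hw z hz, ← hw c hc, hvc, Pi.zero_apply]
  · obtain ⟨ε, hε, hball⟩ := Metric.isOpen_iff.1 (hopen U subset_rfl hU) 0 ⟨c, hc, hvc⟩
    obtain ⟨z, hz, hvz⟩ := hball (show (-(ε / 2 : ℝ) : ℂ) ∈ ball 0 ε by
      rw [mem_ball_zero_iff, norm_neg, norm_real, Real.norm_of_nonneg (by positivity)]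
      linarith)
    have := hre z hz
    rw [hvz, neg_re, ofReal_re] at this
    linarith

lemma map_zero_eq_zero_of_re_nonneg {v : ℂ → ℂ} (hv : DifferentiableOn ℂ v (ball 0 1))
    (hre : ∀ z ∈ ball (0 : ℂ) 1, 0 ≤ (v z).re) (hdecay : v =o[𝓝[ball 0 1] 1] (· - 1)) :
    v 0 = 0 := by
  refine norm_le_zero_iff.1 (le_of_forall_pos_le_add fun ε hε => ?_)
  have hIoo : ∀ᶠ x in 𝓝[<] (1 : ℝ), x ∈ Ioo 0 1 := Ioo_mem_nhdsLT zero_lt_one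
  have hreal : Tendsto (fun x : ℝ => (x : ℂ)) (𝓝[<] 1) (𝓝[ball 0 1] 1) := by
    refine tendsto_nhdsWithin_iff.2 ⟨?_, ?_⟩
    · exact (continuous_ofReal.tendsto' 1 1 ofReal_one).mono_left nhdsWithin_le_nhds
    · filter_upwards [hIoo] with x hx
      rw [mem_ball_zero_iff, norm_real, Real.norm_of_nonneg hx.1.le]
      exact hx.2
  obtain ⟨x, ⟨hx0, hx1⟩, hvx⟩ := (hIoo.and
    (hreal.eventually (hdecay.bound (half_pos hε)))).exists
  have hxD : (x : ℂ) ∈ ball (0 : ℂ) 1 := by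
    rw [mem_ball_zero_iff, norm_real, Real.norm_of_nonneg hx0.le]; exact hx1
  have hgrowth := norm_mul_one_sub_norm_le_of_re_nonneg hv hre hxD
  have hx1' : ‖(x : ℂ) - 1‖ = 1 - x := by
    rw [← ofReal_one, ← ofReal_sub, norm_real, Real.norm_of_nonpos (by linarith)]; ring
  rw [norm_real, Real.norm_of_nonneg hx0.le] at hgrowth
  rw [hx1'] at hvx
  nlinarith

theorem eqOn_zero_of_neg_re_cayley_le {v : ℂ → ℂ} (hv : DifferentiableOn ℂ v (ball 0 1))
    (hlow : ∀ w ∈ ball (0 : ℂ) 1, -(cayley w).re ≤ (v w).re)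
    (hdecay : v =o[𝓝[ball 0 1] 1] (· - 1)) : EqOn v 0 (ball 0 1) := by
  have hlim : Tendsto v (𝓝[ball 0 1] 1) (𝓝 0) :=
    hdecay.trans_tendsto (tendsto_sub_nhds_zero_iff.2 (tendsto_id.mono_left nhdsWithin_le_nhds))
  have hre : ∀ z ∈ ball (0 : ℂ) 1, 0 ≤ (v z).re := fun z hz =>
    re_nonneg_of_neg_re_cayley_le hv hlow hlim hz
  exact eqOn_zero_of_re_nonneg_of_eq_zero isOpen_ball (convex_ball 0 1).isPreconnected hv hre
    (mem_ball_self one_pos) (map_zero_eq_zero_of_re_nonneg hv hre hdecay)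

lemma isLittleO_cayley_sub_cayley {f : ℂ → ℂ} {C δ : ℝ} (hC : 0 < C) (hδ : 0 < δ)
    (hf : ∀ z ∈ ball (0 : ℂ) 1, ‖z - 1‖ < δ → ‖f z - z‖ ≤ C * ‖z - 1‖ ^ 4) :
    (fun z => cayley (f z) - cayley z) =o[𝓝[ball 0 1] 1] (· - 1) := by
  refine IsBigO.trans_isLittleO (g := fun z => ‖z - 1‖ ^ 2) ?_
    ((isLittleO_pow_sub_sub 1 one_lt_two).mono nhdsWithin_le_nhds)
  set ρ := min δ (min 1 (1 / (2 * C)))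
  have hρ : 0 < ρ := lt_min hδ (lt_min one_pos (by positivity))
  refine IsBigO.of_bound (4 * C) ?_
  filter_upwards [self_mem_nhdsWithin, nhdsWithin_le_nhds (ball_mem_nhds 1 hρ)] with z hzD hzρ
  rw [mem_ball, dist_eq_norm] at hzρ
  have hbound := hf z hzD (hzρ.trans_le (min_le_left _ _))
  set t := ‖z - 1‖
  have ht : 0 < t := norm_pos_iff.2 (sub_ne_zero.2 (ne_one_of_mem_ball hzD))
  have ht1 : t ≤ 1 := (hzρ.trans_le ((min_le_right _ _).trans (min_le_left _ _))).le
  have htC : t ≤ 1 / (2 * C) := (hzρ.trans_le ((min_le_right _ _).trans (min_le_right _ _))).le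
  have hnorm : ‖(1 : ℂ) - z‖ = t := norm_sub_rev _ _
  have hsmall : 2 * ‖f z - z‖ ≤ ‖1 - z‖ := by
    rw [hnorm]
    rw [le_div_iff₀ (by positivity)] at htC
    nlinarith [mul_le_mul_of_nonneg_right htC (pow_nonneg ht.le 3),
      pow_le_of_le_one ht.le ht1 three_ne_zero]
  calc ‖cayley (f z) - cayley z‖ ≤ 4 * ‖f z - z‖ / ‖1 - z‖ ^ 2 :=
        norm_cayley_sub_cayley_le (ne_one_of_mem_ball hzD) hsmall
    _ ≤ 4 * (C * t ^ 4) / t ^ 2 := by rw [hnorm]; gcongr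
    _ = 4 * C * ‖t ^ 2‖ := by
        rw [Real.norm_of_nonneg (by positivity)]
        field_simp

/-- **Burns–Krantz theorem on the disc.** If `f` is a holomorphic self-map of the open
unit disc satisfying `f(z) = z + O(|z - 1|^4)` as `z → 1` within the disc,
then `f(z) = z` for all `z` in the disc. -/
theorem burns_krantz_disc
    (f : ℂ → ℂ)
    (hf : DifferentiableOn ℂ f (ball (0 : ℂ) 1))
    (hmap : Set.MapsTo f (ball (0 : ℂ) 1) (ball (0 : ℂ) 1))
    (hO : ∃ C > (0 : ℝ), ∃ δ > (0 : ℝ), ∀ z ∈ ball (0 : ℂ) 1,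
      ‖z - 1‖ < δ → ‖f z - z‖ ≤ C * ‖z - 1‖ ^ 4) :
    ∀ z ∈ ball (0 : ℂ) 1, f z = z := by
  obtain ⟨C, hC, δ, hδ, hbound⟩ := hO
  have hball : ball (0 : ℂ) 1 ⊆ {1}ᶜ := fun w hw => ne_one_of_mem_ball hw
  have hv : DifferentiableOn ℂ (fun z => cayley (f z) - cayley z) (ball 0 1) :=
    (differentiableOn_cayley.comp hf (hmap.mono_right hball)).sub
      (differentiableOn_cayley.mono hball)
  have hlow : ∀ w ∈ ball (0 : ℂ) 1, -(cayley w).re ≤ (cayley (f w) - cayley w).re := by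
    intro w hw
    rw [sub_re]
    linarith [re_cayley_nonneg (mem_ball_zero_iff.1 (hmap hw)).le]
  intro z hz
  exact cayley_injOn (hball (hmap hz)) (hball hz) <| sub_eq_zero.1 <|
    eqOn_zero_of_neg_re_cayley_le hv hlow (isLittleO_cayley_sub_cayley hC hδ hbound) hz
end

section
/- Let φ be holomorphic on the open unit disc D and continuous on the closed unit disc, nonvanishing on a neighborhood of the unit circle ∂D (intersected with the closed disc), with distinct zeros α_1,…,α_k ∈ D of multiplicities s_1,…,s_k. For τ ∈ ∂D let ν_τ denote the sum of those s_j for which (1 + α_j)/(1 + conj(α_j)) = τ. Then there exists a function f, holomorphic on D and continuous on the closed unit disc, such that: (i) |f(z)| < |φ(z)| for all z ∈ ∂D except finitely many points; (ii) for every τ ∈ ∂D, f(z) = φ(z) + O(|z − τ|^{2 ν_τ}) as z → τ within D; and (iii) f(z) = φ(z) + O(|z − 1|^{2 ν_1 + 1}) as z → 1 within D. -/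
/-!
On the unit circle `conj (z - α) * z = 1 - conj α * z`, so with `N = ∑ s_j` we get
`conj (rootProd z) * z ^ N = reflectedProd z`, and `reflectedProd` has no zeros on the closed
disc; likewise `-conj τ * (z - τ) ^ 2 = z * ‖z - τ‖ ^ 2`, so
`boundaryProd z = z ^ N * ‖boundaryProd z‖`.
Writing `φ = rootProd * v` with `v` holomorphic inside and continuous up to the circle, the
`perturbation` `g = (1 - z) * boundaryProd * v / reflectedProd` is holomorphic, vanishes to order
`2 ν_τ` at every `τ` and to one more order at `1`, and on the circle
`g * conj φ = ‖boundaryProd‖ * ‖v‖ ^ 2 * (1 - z)` is a nonnegative multiple of `1 - z`. Hence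
`‖φ - ε g‖ < ‖φ‖` on the circle away from `1` and the `τ_j` as soon as
`ε * ‖boundaryProd‖ < ‖reflectedProd‖ ^ 2`, which compactness makes possible.
-/

open Metric Finset ComplexConjugate Filter Topology

namespace Complex

lemma conj_mul_self_of_norm_eq_one {z : ℂ} (hz : ‖z‖ = 1) : conj z * z = 1 := by
  rw [conj_mul', hz]; norm_num

lemma neg_conj_mul_sub_sq_of_norm_eq_one {z τ : ℂ} (hz : ‖z‖ = 1) (hτ : ‖τ‖ = 1) :
    -conj τ * (z - τ) ^ 2 = z * (‖z - τ‖ ^ 2 : ℝ) := by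
  push_cast
  rw [← mul_conj', map_sub]
  linear_combination (z - τ) * conj_mul_self_of_norm_eq_one hτ -
    (z - τ) * conj_mul_self_of_norm_eq_one hz

lemma norm_one_add_div_one_add_conj {a : ℂ} (ha : ‖a‖ < 1) :
    ‖(1 + a) / (1 + conj a)‖ = 1 := by
  have h : 1 + a ≠ 0 := fun h => by
    rw [eq_neg_of_add_eq_zero_right h, norm_neg, norm_one] at ha
    exact ha.false
  rw [norm_div, show 1 + conj a = conj (1 + a) by simp, RCLike.norm_conj,
    div_self (norm_ne_zero_iff.2 h)]

lemma sq_norm_ofReal_add_mul_of_norm_eq_one {z : ℂ} (hz : ‖z‖ = 1) (x c : ℝ) :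
    ‖(x : ℂ) + c * z‖ ^ 2 = (x + c) ^ 2 - x * c * ‖1 - z‖ ^ 2 := by
  have hz2 : z.re ^ 2 + z.im ^ 2 = 1 := by
    rw [← sq_norm_sub_sq_im, hz]; ring
  rw [Complex.sq_norm, Complex.sq_norm, normSq_apply, normSq_apply]
  simp only [add_re, ofReal_re, mul_re, ofReal_im, zero_mul, sub_zero, add_im, mul_im,
    zero_add, sub_re, one_re, sub_im, one_im, zero_sub, mul_neg, neg_mul, neg_neg]
  linear_combination (c ^ 2 + x * c) * hz2

lemma norm_sub_lt_of_mul_conj_eq {a b z : ℂ} {c : ℝ} (hz : ‖z‖ = 1) (hz1 : z ≠ 1)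
    (hc : 0 < c) (hca : c < ‖a‖ ^ 2) (h : b * conj a = c * (1 - z)) : ‖a - b‖ < ‖a‖ := by
  have ha : 0 < ‖a‖ := by nlinarith [norm_nonneg a]
  have hrw : (a - b) * conj a = ((‖a‖ ^ 2 - c : ℝ) : ℂ) + c * z := by
    rw [sub_mul, mul_conj', h]; push_cast; ring
  have hsq := sq_norm_ofReal_add_mul_of_norm_eq_one hz (‖a‖ ^ 2 - c) c
  rw [← hrw, norm_mul, RCLike.norm_conj] at hsq
  have hdefect : 0 < (‖a‖ ^ 2 - c) * c * ‖1 - z‖ ^ 2 := by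
    have := sub_pos.2 hca
    have := norm_pos_iff.2 (sub_ne_zero.2 hz1.symm)
    positivity
  have hlt : (‖a - b‖ * ‖a‖) ^ 2 < (‖a‖ * ‖a‖) ^ 2 := by rw [hsq]; nlinarith
  exact lt_of_mul_lt_mul_right (lt_of_pow_lt_pow_left₀ 2 (by positivity) hlt) ha.le

end Complex

lemma IsCompact.exists_pos_mul_lt {X : Type*} [TopologicalSpace X] {K : Set X}
    (hK : IsCompact K) {F G : X → ℝ} (hF : ContinuousOn F K) (hG : ContinuousOn G K)
    (hG0 : ∀ x ∈ K, 0 < G x) : ∃ ε > 0, ∀ x ∈ K, ε * F x < G x := by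
  have hquot : ContinuousOn (fun x => G x / (|F x| + 1)) K :=
    hG.div (hF.abs.add continuousOn_const) fun x _ => by positivity
  obtain ⟨ε, hε, hεle⟩ :=
    hK.exists_forall_le' hquot fun x hx => div_pos (hG0 x hx) (by positivity)
  refine ⟨ε, hε, fun x hx => ?_⟩
  have h := hεle x hx
  rw [le_div_iff₀ (by positivity)] at h
  nlinarith [le_abs_self (F x)]

lemma exists_continuousOn_closedBall_eq_mul {φ p u : ℂ → ℂ}
    (hφ : ContinuousOn φ (closedBall 0 1)) (hp : Continuous p)
    (hp0 : ∀ z ∈ sphere (0 : ℂ) 1, p z ≠ 0) (hu : DifferentiableOn ℂ u (ball 0 1))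
    (hfact : ∀ z ∈ ball (0 : ℂ) 1, φ z = p z * u z) :
    ∃ v : ℂ → ℂ, DifferentiableOn ℂ v (ball 0 1) ∧ ContinuousOn v (closedBall 0 1) ∧
      ∀ z ∈ closedBall (0 : ℂ) 1, φ z = p z * v z := by
  classical
  set v : ℂ → ℂ := fun z => if z ∈ ball (0 : ℂ) 1 then u z else φ z / p z
  have hv_ball : ∀ z ∈ ball (0 : ℂ) 1, v z = u z := fun z hz => if_pos hz
  have hfact_of_ne_zero : ∀ z ∈ closedBall (0 : ℂ) 1, p z ≠ 0 → φ z = p z * v z := by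
    intro z hz hpz
    by_cases hzb : z ∈ ball (0 : ℂ) 1
    · rw [hv_ball z hzb, hfact z hzb]
    · simp only [v, if_neg hzb]
      field_simp
  have hsphere : ∀ z ∈ closedBall (0 : ℂ) 1, z ∉ ball (0 : ℂ) 1 → z ∈ sphere (0 : ℂ) 1 := by
    intro z hz hzb
    rw [mem_sphere_zero_iff_norm]
    exact le_antisymm (mem_closedBall_zero_iff.1 hz) (not_lt.1 (mt mem_ball_zero_iff.2 hzb))
  refine ⟨v, hu.congr hv_ball, fun z hz => ?_, fun z hz => ?_⟩
  · by_cases hzb : z ∈ ball (0 : ℂ) 1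
    · have hvu : v =ᶠ[𝓝 z] u := eventually_of_mem (isOpen_ball.mem_nhds hzb) hv_ball
      exact ((hu.continuousOn.continuousAt (isOpen_ball.mem_nhds hzb)).congr
        hvu.symm).continuousWithinAt
    · have hpz := hp0 z (hsphere z hz hzb)
      have hquot : ContinuousWithinAt (fun w => φ w / p w) (closedBall 0 1) z :=
        (hφ z hz).div hp.continuousWithinAt hpz
      refine hquot.congr_of_eventuallyEq ?_ ?_
      · filter_upwards [self_mem_nhdsWithin,
          nhdsWithin_le_nhds (hp.continuousAt.eventually_ne hpz)] with w hw hpw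
        rw [hfact_of_ne_zero w hw hpw, mul_div_cancel_left₀ _ hpw]
      · rw [hfact_of_ne_zero z hz hpz, mul_div_cancel_left₀ _ hpz]
  · by_cases hzb : z ∈ ball (0 : ℂ) 1
    · rw [hv_ball z hzb, hfact z hzb]
    · exact hfact_of_ne_zero z hz (hp0 z (hsphere z hz hzb))

variable {ι : Type*} [Fintype ι]

def rootProd (α : ι → ℂ) (s : ι → ℕ) (z : ℂ) : ℂ := ∏ i, (z - α i) ^ s i

def reflectedProd (α : ι → ℂ) (s : ι → ℕ) (z : ℂ) : ℂ := ∏ i, (1 - conj (α i) * z) ^ s i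

def boundaryProd (τ : ι → ℂ) (s : ι → ℕ) (z : ℂ) : ℂ :=
  ∏ i, (-conj (τ i) * (z - τ i) ^ 2) ^ s i

section Products

variable (α τ : ι → ℂ) (s : ι → ℕ) {z : ℂ}

lemma conj_rootProd_mul_pow (hz : ‖z‖ = 1) :
    conj (rootProd α s z) * z ^ (∑ i, s i) = reflectedProd α s z := by
  simp only [rootProd, reflectedProd, map_prod, map_pow, ← prod_pow_eq_pow_sum,
    ← prod_mul_distrib, ← mul_pow, map_sub, sub_mul, Complex.conj_mul_self_of_norm_eq_one hz]

lemma norm_rootProd_of_norm_eq_one (hz : ‖z‖ = 1) :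
    ‖rootProd α s z‖ = ‖reflectedProd α s z‖ := by
  rw [← conj_rootProd_mul_pow α s hz, norm_mul, norm_pow, hz, one_pow, mul_one,
    RCLike.norm_conj]

variable {α τ}

lemma reflectedProd_ne_zero (hα : ∀ i, ‖α i‖ < 1) (hz : ‖z‖ ≤ 1) :
    reflectedProd α s z ≠ 0 := by
  refine prod_ne_zero_iff.2 fun i _ => pow_ne_zero _ (sub_ne_zero.2 fun h => ?_)
  have : ‖conj (α i) * z‖ < 1 := by
    rw [norm_mul, RCLike.norm_conj]
    nlinarith [hα i, norm_nonneg z, norm_nonneg (α i)]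
  rw [← h, norm_one] at this
  exact this.false

lemma rootProd_ne_zero (hα : ∀ i, ‖α i‖ < 1) (hz : ‖z‖ = 1) : rootProd α s z ≠ 0 := by
  rw [← norm_ne_zero_iff, norm_rootProd_of_norm_eq_one α s hz, norm_ne_zero_iff]
  exact reflectedProd_ne_zero s hα hz.le

lemma boundaryProd_ne_zero (hτ : ∀ i, ‖τ i‖ = 1) (hzτ : ∀ i, z ≠ τ i) :
    boundaryProd τ s z ≠ 0 := by
  refine prod_ne_zero_iff.2 fun i _ => pow_ne_zero _ (mul_ne_zero ?_ ?_)
  · rw [neg_ne_zero, map_ne_zero, ← norm_ne_zero_iff, hτ i]; exact one_ne_zero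
  · exact pow_ne_zero _ (sub_ne_zero.2 (hzτ i))

lemma boundaryProd_eq_pow_mul_norm (hτ : ∀ i, ‖τ i‖ = 1) (hz : ‖z‖ = 1) :
    boundaryProd τ s z = z ^ (∑ i, s i) * ‖boundaryProd τ s z‖ := by
  simp only [boundaryProd, Complex.neg_conj_mul_sub_sq_of_norm_eq_one hz (hτ _), norm_prod,
    norm_pow, norm_mul, hz, one_pow, one_mul, Complex.norm_real, Real.norm_eq_abs, abs_norm,
    mul_pow, prod_mul_distrib, prod_pow_eq_pow_sum]
  push_cast
  rfl

lemma norm_boundaryProd_le (hτ : ∀ i, ‖τ i‖ = 1) (hz : ‖z‖ ≤ 1) (t : ℂ) :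
    ‖boundaryProd τ s z‖
      ≤ 4 ^ (∑ i, s i) * ‖z - t‖ ^ (2 * ∑ i ∈ univ.filter (τ · = t), s i) := by
  have hfactor : ∀ i, ‖(-conj (τ i) * (z - τ i) ^ 2) ^ s i‖
      ≤ 4 ^ s i * if τ i = t then ‖z - t‖ ^ (2 * s i) else 1 := by
    intro i
    rw [norm_pow, norm_mul, norm_neg, RCLike.norm_conj, hτ i, one_mul, norm_pow, ← pow_mul]
    split_ifs with hi
    · rw [hi]
      exact le_mul_of_one_le_left (by positivity) (one_le_pow₀ (by norm_num))
    · have : ‖z - τ i‖ ≤ 2 := (norm_sub_le _ _).trans (by linarith [hτ i])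
      have hsq : ‖z - τ i‖ ^ 2 ≤ 4 := by nlinarith [norm_nonneg (z - τ i)]
      rw [mul_one, pow_mul]
      exact pow_le_pow_left₀ (sq_nonneg _) hsq _
  calc ‖boundaryProd τ s z‖ ≤ ∏ i, 4 ^ s i * if τ i = t then ‖z - t‖ ^ (2 * s i) else 1 := by
        rw [boundaryProd, norm_prod]
        exact prod_le_prod (fun i _ => norm_nonneg _) fun i _ => hfactor i
    _ = 4 ^ (∑ i, s i) * ‖z - t‖ ^ (2 * ∑ i ∈ univ.filter (τ · = t), s i) := by
        rw [prod_mul_distrib, prod_pow_eq_pow_sum, ← prod_filter, prod_pow_eq_pow_sum, mul_sum]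

end Products

noncomputable def perturbation (α τ : ι → ℂ) (s : ι → ℕ) (v : ℂ → ℂ) (z : ℂ) : ℂ :=
  (1 - z) * boundaryProd τ s z * v z / reflectedProd α s z

section Perturbation

variable {α τ : ι → ℂ} {s : ι → ℕ} {v : ℂ → ℂ}

lemma differentiableOn_perturbation (hα : ∀ i, ‖α i‖ < 1)
    (hv : DifferentiableOn ℂ v (ball 0 1)) :
    DifferentiableOn ℂ (perturbation α τ s v) (ball 0 1) :=
  DifferentiableOn.div (by unfold boundaryProd; fun_prop) (by unfold reflectedProd; fun_prop)
    fun z hz => reflectedProd_ne_zero s hα (mem_ball_zero_iff.1 hz).le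

lemma continuousOn_perturbation (hα : ∀ i, ‖α i‖ < 1) (hv : ContinuousOn v (closedBall 0 1)) :
    ContinuousOn (perturbation α τ s v) (closedBall 0 1) :=
  ContinuousOn.div (by unfold boundaryProd; fun_prop) (by unfold reflectedProd; fun_prop)
    fun z hz => reflectedProd_ne_zero s hα (mem_closedBall_zero_iff.1 hz)

lemma perturbation_mul_conj (hα : ∀ i, ‖α i‖ < 1) (hτ : ∀ i, ‖τ i‖ = 1) {φ : ℂ → ℂ} {z : ℂ}
    (hz : ‖z‖ = 1) (hφz : φ z = rootProd α s z * v z) :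
    perturbation α τ s v z * conj (φ z)
      = (‖boundaryProd τ s z‖ * ‖v z‖ ^ 2 : ℝ) * (1 - z) := by
  have hP := reflectedProd_ne_zero s hα hz.le
  have hq := boundaryProd_eq_pow_mul_norm s hτ hz
  set r := ‖boundaryProd τ s z‖
  rw [← conj_rootProd_mul_pow α s hz] at hP
  rw [perturbation, hq, hφz, ← conj_rootProd_mul_pow α s hz, div_mul_eq_mul_div,
    div_eq_iff hP, map_mul]
  push_cast
  rw [← Complex.mul_conj']
  ring

lemma exists_norm_perturbation_le (hα : ∀ i, ‖α i‖ < 1) (hτ : ∀ i, ‖τ i‖ = 1)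
    (hv : ContinuousOn v (closedBall 0 1)) :
    ∃ K ≥ 0, ∀ t, ∀ z ∈ closedBall (0 : ℂ) 1, ‖perturbation α τ s v z‖
      ≤ K * ‖z - 1‖ * ‖z - t‖ ^ (2 * ∑ i ∈ univ.filter (τ · = t), s i) := by
  have hquot : ContinuousOn (fun z => v z / reflectedProd α s z) (closedBall 0 1) :=
    hv.div (by unfold reflectedProd; fun_prop)
      fun z hz => reflectedProd_ne_zero s hα (mem_closedBall_zero_iff.1 hz)
  obtain ⟨M, hM⟩ := (isCompact_closedBall (0 : ℂ) 1).exists_bound_of_continuousOn hquot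
  have hM0 : 0 ≤ M := (norm_nonneg _).trans (hM 0 (mem_closedBall_self zero_le_one))
  refine ⟨4 ^ (∑ i, s i) * M, by positivity, fun t z hz => ?_⟩
  have hq := norm_boundaryProd_le s hτ (mem_closedBall_zero_iff.1 hz) t
  rw [perturbation, mul_div_assoc, norm_mul, norm_mul, norm_sub_rev]
  calc ‖z - 1‖ * ‖boundaryProd τ s z‖ * ‖v z / reflectedProd α s z‖
      ≤ ‖z - 1‖ * (4 ^ (∑ i, s i) * ‖z - t‖ ^ (2 * ∑ i ∈ univ.filter (τ · = t), s i)) * M := by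
        gcongr
        exact hM z hz
    _ = _ := by ring

end Perturbation

theorem exists_norm_lt_on_sphere_of_eq_rootProd_mul {α τ : ι → ℂ} (s : ι → ℕ)
    (hα : ∀ i, ‖α i‖ < 1) (hτ : ∀ i, ‖τ i‖ = 1) {φ v : ℂ → ℂ}
    (hφd : DifferentiableOn ℂ φ (ball 0 1)) (hφc : ContinuousOn φ (closedBall 0 1))
    (hφ0 : ∀ z ∈ sphere (0 : ℂ) 1, φ z ≠ 0)
    (hvd : DifferentiableOn ℂ v (ball 0 1)) (hvc : ContinuousOn v (closedBall 0 1))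
    (hfact : ∀ z ∈ sphere (0 : ℂ) 1, φ z = rootProd α s z * v z) :
    ∃ f : ℂ → ℂ, DifferentiableOn ℂ f (ball 0 1) ∧ ContinuousOn f (closedBall 0 1) ∧
      (∀ z ∈ sphere (0 : ℂ) 1, z ≠ 1 → (∀ i, z ≠ τ i) → ‖f z‖ < ‖φ z‖) ∧
      ∃ K ≥ 0, ∀ t, ∀ z ∈ closedBall (0 : ℂ) 1,
        ‖f z - φ z‖ ≤ K * ‖z - 1‖ * ‖z - t‖ ^ (2 * ∑ i ∈ univ.filter (τ · = t), s i) := by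
  set g := perturbation α τ s v
  obtain ⟨ε, hε, hεlt⟩ := (isCompact_sphere (0 : ℂ) 1).exists_pos_mul_lt
    (F := fun z => ‖boundaryProd τ s z‖) (G := fun z => ‖reflectedProd α s z‖ ^ 2)
    (by unfold boundaryProd; fun_prop) (by unfold reflectedProd; fun_prop)
    fun z hz => by
      have := reflectedProd_ne_zero s hα (mem_sphere_zero_iff_norm.1 hz).le
      positivity
  obtain ⟨K, hK0, hK⟩ := exists_norm_perturbation_le (s := s) hα hτ hvc
  refine ⟨fun z => φ z - ε * g z, hφd.sub ((differentiableOn_perturbation hα hvd).const_mul _),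
    hφc.sub ((continuousOn_perturbation hα hvc).const_mul _), fun z hz hz1 hzτ => ?_,
    ε * K, by positivity, fun t z hz => ?_⟩
  · have hz' := mem_sphere_zero_iff_norm.1 hz
    have hv0 : v z ≠ 0 := right_ne_zero_of_mul (hfact z hz ▸ hφ0 z hz)
    have hq0 := boundaryProd_ne_zero s hτ hzτ
    refine Complex.norm_sub_lt_of_mul_conj_eq (c := ε * (‖boundaryProd τ s z‖ * ‖v z‖ ^ 2))
      hz' hz1 (by positivity) ?_ ?_
    · rw [hfact z hz, norm_mul, norm_rootProd_of_norm_eq_one α s hz', mul_pow, ← mul_assoc]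
      exact mul_lt_mul_of_pos_right (hεlt z hz) (by positivity)
    · rw [mul_assoc, perturbation_mul_conj hα hτ hz' (hfact z hz)]
      push_cast
      ring
  · rw [sub_sub_cancel_left, norm_neg, norm_mul, Complex.norm_real, Real.norm_of_nonneg hε.le,
      mul_assoc ε, mul_assoc ε]
    exact mul_le_mul_of_nonneg_left (hK t z hz) hε.le

open Classical in
theorem sharpness_of_exponents_general
    (k : ℕ) (φ : ℂ → ℂ)
    (hφd : DifferentiableOn ℂ φ (ball (0 : ℂ) 1))
    (hφc : ContinuousOn φ (closedBall (0 : ℂ) 1))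
    (hnv : ∃ r : ℝ, r < 1 ∧ ∀ z ∈ closedBall (0 : ℂ) 1, r < ‖z‖ → φ z ≠ 0)
    (α : Fin k → ℂ) (hαD : ∀ j, α j ∈ ball (0 : ℂ) 1)
    (sj : Fin k → ℕ)
    (u : ℂ → ℂ)
    (hud : DifferentiableOn ℂ u (ball (0 : ℂ) 1))
    (hfact : ∀ z ∈ ball (0 : ℂ) 1, φ z = (∏ j, (z - α j) ^ sj j) * u z) :
    ∃ f : ℂ → ℂ,
      DifferentiableOn ℂ f (ball (0 : ℂ) 1) ∧
      ContinuousOn f (closedBall (0 : ℂ) 1) ∧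
      (∃ S : Finset ℂ, ∀ z ∈ sphere (0 : ℂ) 1, z ∉ S → ‖f z‖ < ‖φ z‖) ∧
      (∀ τ ∈ sphere (0 : ℂ) 1, ∃ C > (0 : ℝ), ∃ δ > (0 : ℝ), ∀ z ∈ ball (0 : ℂ) 1,
        ‖z - τ‖ < δ → ‖f z - φ z‖ ≤ C * ‖z - τ‖ ^
          (2 * ∑ j ∈ Finset.univ.filter
            (fun j => (1 + α j) / (1 + (starRingEnd ℂ) (α j)) = τ), sj j)) ∧
      (∃ C > (0 : ℝ), ∃ δ > (0 : ℝ), ∀ z ∈ ball (0 : ℂ) 1,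
        ‖z - 1‖ < δ → ‖f z - φ z‖ ≤ C * ‖z - 1‖ ^
          (2 * (∑ j ∈ Finset.univ.filter
            (fun j => (1 + α j) / (1 + (starRingEnd ℂ) (α j)) = 1), sj j) + 1)) := by
  obtain ⟨r, hr1, hnv⟩ := hnv
  have hφ0 : ∀ z ∈ sphere (0 : ℂ) 1, φ z ≠ 0 := fun z hz =>
    hnv z (sphere_subset_closedBall hz) (by rwa [mem_sphere_zero_iff_norm.1 hz])
  have hα : ∀ j, ‖α j‖ < 1 := fun j => mem_ball_zero_iff.1 (hαD j)
  obtain ⟨v, hvd, hvc, hφv⟩ := exists_continuousOn_closedBall_eq_mul hφc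
    (by unfold rootProd; fun_prop)
    (fun z hz => rootProd_ne_zero sj hα (mem_sphere_zero_iff_norm.1 hz)) hud hfact
  obtain ⟨f, hfd, hfc, hflt, K, hK0, hK⟩ := exists_norm_lt_on_sphere_of_eq_rootProd_mul sj hα
    (τ := fun j => (1 + α j) / (1 + conj (α j)))
    (fun j => Complex.norm_one_add_div_one_add_conj (hα j))
    hφd hφc hφ0 hvd hvc fun z hz => hφv z (sphere_subset_closedBall hz)
  refine ⟨f, hfd, hfc, ⟨insert 1 (univ.image fun j => (1 + α j) / (1 + conj (α j))),
    fun z hz hzS => hflt z hz ?_ ?_⟩,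
    fun t _ => ⟨2 * K + 1, by positivity, 1, one_pos, fun z hz _ => ?_⟩,
    ⟨K + 1, by positivity, 1, one_pos, fun z hz _ => ?_⟩⟩
  · rintro rfl
    exact hzS (mem_insert_self _ _)
  · rintro j rfl
    exact hzS (mem_insert_of_mem (mem_image_of_mem _ (mem_univ j)))
  · have h2 : ‖z - 1‖ ≤ 2 :=
      (norm_sub_le _ _).trans (by rw [norm_one]; linarith [mem_ball_zero_iff.1 hz])
    refine (hK t z (ball_subset_closedBall hz)).trans ?_
    gcongr
    nlinarith
  · refine (hK 1 z (ball_subset_closedBall hz)).trans ?_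
    rw [mul_assoc, ← pow_succ']
    gcongr
    linarith

open Classical in
/-- **Sharpness of the boundary exponents.** Let `φ` be holomorphic on the unit disc,
continuous on the closed disc, nonvanishing on a neighborhood of the unit circle
(intersected with the closed disc), with distinct zeros `α j ∈ D` of multiplicities
`sj j` (encoded by a factorization `φ = ∏ (z - α j)^(sj j) * u` with `u` nonvanishing
on the disc). For `τ ∈ ∂D` put `ν τ = ∑` of those `sj j` with
`(1 + α j)/(1 + conj (α j)) = τ`. Then some `f`, holomorphic on the disc and continuous
on the closed disc, satisfies `|f| < |φ|` on the circle except finitely many points,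
`f(z) = φ(z) + O(|z - τ|^(2 ν τ))` at every `τ ∈ ∂D`, and
`f(z) = φ(z) + O(|z - 1|^(2 ν 1 + 1))` at `1`. -/
theorem sharpness_of_exponents
    (k : ℕ) (φ : ℂ → ℂ)
    (hφd : DifferentiableOn ℂ φ (ball (0 : ℂ) 1))
    (hφc : ContinuousOn φ (closedBall (0 : ℂ) 1))
    (hnv : ∃ r : ℝ, r < 1 ∧ ∀ z ∈ closedBall (0 : ℂ) 1, r < ‖z‖ → φ z ≠ 0)
    (α : Fin k → ℂ) (hαD : ∀ j, α j ∈ ball (0 : ℂ) 1)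
    (hαinj : Function.Injective α)
    (sj : Fin k → ℕ) (hsj : ∀ j, 0 < sj j)
    (u : ℂ → ℂ)
    (hud : DifferentiableOn ℂ u (ball (0 : ℂ) 1))
    (hu0 : ∀ z ∈ ball (0 : ℂ) 1, u z ≠ 0)
    (hfact : ∀ z ∈ ball (0 : ℂ) 1, φ z = (∏ j, (z - α j) ^ sj j) * u z) :
    ∃ f : ℂ → ℂ,
      DifferentiableOn ℂ f (ball (0 : ℂ) 1) ∧
      ContinuousOn f (closedBall (0 : ℂ) 1) ∧
      (∃ S : Finset ℂ, ∀ z ∈ sphere (0 : ℂ) 1, z ∉ S → ‖f z‖ < ‖φ z‖) ∧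
      (∀ τ ∈ sphere (0 : ℂ) 1, ∃ C > (0 : ℝ), ∃ δ > (0 : ℝ), ∀ z ∈ ball (0 : ℂ) 1,
        ‖z - τ‖ < δ → ‖f z - φ z‖ ≤ C * ‖z - τ‖ ^
          (2 * ∑ j ∈ Finset.univ.filter
            (fun j => (1 + α j) / (1 + (starRingEnd ℂ) (α j)) = τ), sj j)) ∧
      (∃ C > (0 : ℝ), ∃ δ > (0 : ℝ), ∀ z ∈ ball (0 : ℂ) 1,
        ‖z - 1‖ < δ → ‖f z - φ z‖ ≤ C * ‖z - 1‖ ^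
          (2 * (∑ j ∈ Finset.univ.filter
            (fun j => (1 + α j) / (1 + (starRingEnd ℂ) (α j)) = 1), sj j) + 1)) :=
  sharpness_of_exponents_general k φ hφd hφc hnv α hαD sj u hud hfact
end

section
/- Let n ≥ 2, ε > 0 and, for α = (α_2,…,α_n) ∈ ℂ^{n−1}, let Z_α = {z = (z_1,…,z_n) ∈ ℂ^n : z_j = α_j (z_1 − 1) for j = 2,…,n}. If |α| > 2/ε, then Z_α ∩ B^n is contained in the ball B_ε(𝟙) of radius ε around 𝟙 = (1,0,…,0), and the boundary of Z_α ∩ B^n (the topological boundary within the affine complex line Z_α) is contained in ∂B^n ∩ B_ε(𝟙). -/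
/-!
On `Z_α` put `w = z₁ - 1`. Then `|z - 𝟙|² = (1 + |α|²) |w|²`, while expanding
`|z|² = |(z - 𝟙) + 𝟙|²` shows that `|z| ≤ 1` forces `|z - 𝟙|² ≤ -2 Re w ≤ 2 |w|`.
Together, `|w| ≤ 2 / (1 + |α|²)` and so `|z - 𝟙|² ≤ 4 / (1 + |α|²) < ε²`.
The boundary statement follows because `Z_α` is closed, so the closure of `Z_α ∩ B^n`
lies in `Z_α ∩ closure B^n`.
-/

open Metric

/-- The affine complex line `Z_α = {z ∈ ℂ^n : z_j = α_j (z_1 - 1), j = 2,…,n}`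
determined by the `(n-1)`-tuple `(α j)_{j ≠ 0}`. -/
def Zslice (n : ℕ) [NeZero n] (α : Fin n → ℂ) : Set (EuclideanSpace ℂ (Fin n)) :=
  {z | ∀ j : Fin n, j ≠ 0 → z j = α j * (z 0 - 1)}

/-- `|α|² = ∑_{j ≠ 0} |α_j|²` for the `(n-1)`-tuple `(α j)_{j ≠ 0}`. -/
noncomputable def normSqTail (n : ℕ) [NeZero n] (α : Fin n → ℂ) : ℝ :=
  ∑ j ∈ Finset.univ.erase (0 : Fin n), ‖α j‖ ^ 2

lemma EuclideanSpace.norm_sub_single_one_sq_le {𝕜 ι : Type*} [RCLike 𝕜] [Fintype ι]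
    [DecidableEq ι] (i : ι) {z : EuclideanSpace 𝕜 ι} (hz : ‖z‖ ≤ 1) :
    ‖z - EuclideanSpace.single i 1‖ ^ 2 ≤ 2 * ‖z i - 1‖ := by
  have hexpand :=
    norm_add_sq (𝕜 := 𝕜) (z - EuclideanSpace.single i 1) (EuclideanSpace.single i 1)
  simp only [sub_add_cancel, EuclideanSpace.inner_single_right, PiLp.norm_single,
    one_mul, norm_one, one_pow, PiLp.sub_apply, PiLp.single_eq_same,
    RCLike.conj_re] at hexpand
  have hz2 : ‖z‖ ^ 2 ≤ 1 := pow_le_one₀ (norm_nonneg z) hz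
  nlinarith [(abs_le.1 (RCLike.abs_re_le_norm (z i - 1))).1]

lemma isClosed_Zslice (n : ℕ) [NeZero n] (α : Fin n → ℂ) : IsClosed (Zslice n α) := by
  simp only [Zslice, Set.ofPred_forall]
  exact isClosed_iInter fun j => isClosed_iInter fun _ => isClosed_eq (by fun_prop) (by fun_prop)

lemma norm_sub_single_sq_of_mem_Zslice {n : ℕ} [NeZero n] {α : Fin n → ℂ}
    {z : EuclideanSpace ℂ (Fin n)} (hz : z ∈ Zslice n α) :
    ‖z - EuclideanSpace.single 0 1‖ ^ 2 = (1 + normSqTail n α) * ‖z 0 - 1‖ ^ 2 := by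
  rw [EuclideanSpace.norm_sq_eq, ← Finset.add_sum_erase _ _ (Finset.mem_univ 0),
    normSqTail, add_mul, one_mul, Finset.sum_mul]
  congr 1
  refine Finset.sum_congr rfl fun j hj => ?_
  have hj0 : j ≠ 0 := Finset.ne_of_mem_erase hj
  simp [hj0, hz j hj0, mul_pow]

lemma norm_sub_single_lt_of_mem_Zslice {n : ℕ} [NeZero n] {ε : ℝ} (hε : 0 < ε)
    {α : Fin n → ℂ} (hα : 2 / ε < Real.sqrt (normSqTail n α))
    {z : EuclideanSpace ℂ (Fin n)} (hzZ : z ∈ Zslice n α) (hz : ‖z‖ ≤ 1) :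
    ‖z - EuclideanSpace.single 0 1‖ < ε := by
  set A := normSqTail n α
  set r := ‖z 0 - 1‖
  have hd := norm_sub_single_sq_of_mem_Zslice hzZ
  have hle := EuclideanSpace.norm_sub_single_one_sq_le 0 hz
  have hAε : 4 < A * ε ^ 2 := by
    have h := (Real.lt_sqrt (by positivity)).1 hα
    rw [div_pow, div_lt_iff₀ (by positivity)] at h
    linarith
  have hA : 0 ≤ A := by nlinarith
  have hr : (1 + A) * r ≤ 2 := by nlinarith [norm_nonneg (z 0 - 1)]
  refine lt_of_pow_lt_pow_left₀ 2 hε.le ?_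
  nlinarith [norm_nonneg (z 0 - 1)]

lemma closure_Zslice_inter_ball_subset (n : ℕ) [NeZero n] (α : Fin n → ℂ) :
    closure (Zslice n α ∩ ball (0 : EuclideanSpace ℂ (Fin n)) 1) ⊆
      Zslice n α ∩ closedBall 0 1 := by
  refine (closure_inter_subset_inter_closure _ _).trans_eq ?_
  rw [(isClosed_Zslice n α).closure_eq, closure_ball _ one_ne_zero]

theorem slice_localization_general
    (n : ℕ) [NeZero n] (ε : ℝ) (hε : 0 < ε) (α : Fin n → ℂ)
    (hα : 2 / ε < Real.sqrt (normSqTail n α)) :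
    Zslice n α ∩ ball (0 : EuclideanSpace ℂ (Fin n)) 1 ⊆
      ball (EuclideanSpace.single (0 : Fin n) (1 : ℂ)) ε ∧
    closure (Zslice n α ∩ ball (0 : EuclideanSpace ℂ (Fin n)) 1) \
        (Zslice n α ∩ ball (0 : EuclideanSpace ℂ (Fin n)) 1) ⊆
      sphere (0 : EuclideanSpace ℂ (Fin n)) 1 ∩
        ball (EuclideanSpace.single (0 : Fin n) (1 : ℂ)) ε := by
  have hloc : ∀ z ∈ Zslice n α ∩ closedBall 0 1,
      z ∈ ball (EuclideanSpace.single (0 : Fin n) (1 : ℂ)) ε := fun z ⟨hzZ, hz⟩ => by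
    rw [mem_ball, dist_eq_norm]
    exact norm_sub_single_lt_of_mem_Zslice hε hα hzZ (mem_closedBall_zero_iff.1 hz)
  refine ⟨fun z ⟨hzZ, hz⟩ => hloc z ⟨hzZ, ball_subset_closedBall hz⟩, ?_⟩
  rintro z ⟨hzcl, hzS⟩
  obtain ⟨hzZ, hz⟩ := closure_Zslice_inter_ball_subset n α hzcl
  have hsphere : z ∈ sphere (0 : EuclideanSpace ℂ (Fin n)) 1 := by
    rw [← closedBall_sdiff_ball]
    exact ⟨hz, fun hzB => hzS ⟨hzZ, hzB⟩⟩
  exact ⟨hsphere, hloc z ⟨hzZ, hz⟩⟩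

/-- **Localization of slices near `𝟙`.** For `n ≥ 2`, `ε > 0` and `|α| > 2/ε`, the
slice `Z_α ∩ B^n` is contained in the ball `B_ε(𝟙)` around `𝟙 = (1,0,…,0)`, and its
topological boundary within the affine line `Z_α` (which, `Z_α ∩ B^n` being open in the
closed set `Z_α`, equals `closure (Z_α ∩ B^n) \ (Z_α ∩ B^n)`) is contained in
`∂B^n ∩ B_ε(𝟙)`. -/
theorem slice_localization
    (n : ℕ) (hn : 2 ≤ n) [NeZero n] (ε : ℝ) (hε : 0 < ε) (α : Fin n → ℂ)
    (hα : 2 / ε < Real.sqrt (normSqTail n α)) :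
    Zslice n α ∩ ball (0 : EuclideanSpace ℂ (Fin n)) 1 ⊆
      ball (EuclideanSpace.single (0 : Fin n) (1 : ℂ)) ε ∧
    closure (Zslice n α ∩ ball (0 : EuclideanSpace ℂ (Fin n)) 1) \
        (Zslice n α ∩ ball (0 : EuclideanSpace ℂ (Fin n)) 1) ⊆
      sphere (0 : EuclideanSpace ℂ (Fin n)) 1 ∩
        ball (EuclideanSpace.single (0 : Fin n) (1 : ℂ)) ε :=
  slice_localization_general n ε hε α hα
end

section
/- Let n ≥ 2, R > 0 and, for α = (α_2,…,α_n) ∈ ℂ^{n−1}, let Z_α = {z = (z_1,…,z_n) ∈ ℂ^n : z_j = α_j (z_1 − 1) for j = 2,…,n}. Then ⋃_{|α| > R} (Z_α ∩ B^n) = ((⋃_{|α| > R} Z_α) \ {𝟙}) ∩ B^n, and this set contains a nonempty open subset of B^n. Consequently, any two holomorphic functions on B^n that agree on ⋃_{|α| > R} (Z_α ∩ B^n) agree on all of B^n. -/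
/-!
Every point `z` of the ball has `z₀ ≠ 1`, so it lies on the slice `Z_α` with
`α_j = z_j / (z₀ - 1)`, and `|α| > R` follows from `R² |z₀ - 1|² < ∑_{j ≠ 0} |z_j|²`.
This strict inequality cuts out an open subset of the ball, nonempty because it contains
`(1 - ε, √ε, 0, …, 0)` for small `ε`. Two holomorphic functions agreeing on it agree on the
whole ball by the one-variable identity theorem on each complex line through a point of it.
-/

open Metric

open Filter Topology

theorem DifferentiableOn.eqOn_of_convex_of_eventuallyEq {E F : Type*}
    [NormedAddCommGroup E] [NormedSpace ℂ E] [NormedAddCommGroup F] [NormedSpace ℂ F]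
    [CompleteSpace F] {f g : E → F} {s : Set E} (hf : DifferentiableOn ℂ f s)
    (hg : DifferentiableOn ℂ g s) (hs : IsOpen s) (hs' : Convex ℝ s) {p : E} (hp : p ∈ s)
    (hfg : f =ᶠ[𝓝 p] g) : Set.EqOn f g s := by
  intro w hw
  set L : ℂ → E := fun ζ => p + ζ • (w - p)
  have hL : Differentiable ℂ L := (differentiable_id.smul_const _).const_add p
  have hD : Convex ℝ (L ⁻¹' s) := (hs'.translate_preimage_right p).linear_preimage
    ((LinearMap.toSpanSingleton ℂ E (w - p)).restrictScalars ℝ)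
  have hmaps : Set.MapsTo L (L ⁻¹' s) s := fun _ h => h
  have hL0 : L 0 = p := by simp [L]
  have hL1 : L 1 = w := by simp [L]
  have hD0 : (0 : ℂ) ∈ L ⁻¹' s := by simpa [hL0]
  have hD1 : (1 : ℂ) ∈ L ⁻¹' s := by simpa [hL1]
  have hDopen : IsOpen (L ⁻¹' s) := hs.preimage hL.continuous
  have hfgL : f ∘ L =ᶠ[𝓝 0] g ∘ L := hfg.comp_tendsto (hL0 ▸ hL.continuous.tendsto 0)
  have hfL := (hf.comp hL.differentiableOn hmaps).analyticOnNhd hDopen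
  have hgL := (hg.comp hL.differentiableOn hmaps).analyticOnNhd hDopen
  simpa [hL1] using hfL.eqOn_of_preconnected_of_eventuallyEq hgL hD.isPreconnected hD0 hfgL hD1

theorem Set.iUnion₂_inter_eq_diff_singleton_inter {α ι : Type*} {p : ι → Prop}
    (s : ι → Set α) {t : Set α} {a : α} (ha : a ∉ t) :
    (⋃ (i) (_ : p i), (s i ∩ t)) = ((⋃ (i) (_ : p i), s i) \ {a}) ∩ t := by
  rw [← Set.inter_sdiff_right_comm, Set.sdiff_singleton_eq_self (fun h => ha h.2),
    Set.iUnion₂_inter]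

section Slices

variable {n : ℕ} [NeZero n]

lemma continuous_normSqTail : Continuous (normSqTail n) := by
  unfold normSqTail
  fun_prop

lemma normSqTail_div (α : Fin n → ℂ) (c : ℂ) :
    normSqTail n (fun j => α j / c) = normSqTail n α / ‖c‖ ^ 2 := by
  simp only [normSqTail, Finset.sum_div, norm_div, div_pow]

lemma normSqTail_add_norm_sq (z : EuclideanSpace ℂ (Fin n)) :
    normSqTail n z + ‖z 0‖ ^ 2 = ‖z‖ ^ 2 := by
  rw [EuclideanSpace.norm_sq_eq, ← Finset.sum_erase_add _ _ (Finset.mem_univ 0)]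
  rfl

lemma normSqTail_single_add_single {i : Fin n} (hi : i ≠ 0) (a b : ℂ) :
    normSqTail n
      (EuclideanSpace.single 0 a + EuclideanSpace.single i b : EuclideanSpace ℂ (Fin n)) =
        ‖b‖ ^ 2 := by
  rw [normSqTail, Finset.sum_eq_single_of_mem i (by simpa using hi)]
  · simp [hi]
  · intro j hj hji
    simp [hji, Finset.ne_of_mem_erase hj]

lemma apply_zero_ne_one_of_mem_ball {z : EuclideanSpace ℂ (Fin n)} (hz : z ∈ ball 0 1) :
    z 0 ≠ 1 := fun h => by
  simpa [h] using (PiLp.norm_apply_le z 0).trans_lt (mem_ball_zero_iff.1 hz)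

lemma mem_Zslice_div {z : EuclideanSpace ℂ (Fin n)} (hz : z 0 ≠ 1) :
    z ∈ Zslice n (fun j => z j / (z 0 - 1)) := fun _ _ =>
  (div_mul_cancel₀ _ (sub_ne_zero.2 hz)).symm

lemma mem_iUnion_Zslice {R : ℝ} {z : EuclideanSpace ℂ (Fin n)} (hz : z 0 ≠ 1)
    (h : R ^ 2 * ‖z 0 - 1‖ ^ 2 < normSqTail n z) :
    z ∈ ⋃ (α : Fin n → ℂ) (_ : R < √(normSqTail n α)), Zslice n α := by
  refine Set.mem_iUnion₂.2 ⟨_, Real.lt_sqrt_of_sq_lt ?_, mem_Zslice_div hz⟩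
  rwa [normSqTail_div, lt_div_iff₀ (pow_pos (norm_pos_iff.2 (sub_ne_zero.2 hz)) 2)]

lemma isOpen_setOf_sq_mul_lt_normSqTail (R : ℝ) :
    IsOpen {z : EuclideanSpace ℂ (Fin n) | R ^ 2 * ‖z 0 - 1‖ ^ 2 < normSqTail n z} :=
  isOpen_lt (by fun_prop) (continuous_normSqTail.comp (PiLp.continuous_ofLp 2 _))

lemma exists_mem_ball_sq_mul_lt_normSqTail (hn : 2 ≤ n) (R : ℝ) :
    ∃ z ∈ ball (0 : EuclideanSpace ℂ (Fin n)) 1,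
      R ^ 2 * ‖z 0 - 1‖ ^ 2 < normSqTail n z := by
  set ε : ℝ := 1 / (2 + R ^ 2)
  have hε : 0 < ε := by positivity
  have hε1 : ε < 1 := by rw [div_lt_one (by positivity)]; nlinarith
  have hεR : R ^ 2 * ε < 1 := by rw [mul_one_div, div_lt_one (by positivity)]; linarith
  set z : EuclideanSpace ℂ (Fin n) :=
    EuclideanSpace.single 0 ((1 - ε : ℝ) : ℂ) + EuclideanSpace.single ⟨1, hn⟩ (√ε : ℂ)
  have htail : normSqTail n z = ε := by
    rw [normSqTail_single_add_single (i := ⟨1, hn⟩) (by simp [Fin.ext_iff]), Complex.norm_real,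
      Real.norm_eq_abs, sq_abs, Real.sq_sqrt hε.le]
  have hz0 : z 0 = (1 - ε : ℝ) := by simp [z, Fin.ext_iff]
  have hz0_norm : ‖z 0‖ = 1 - ε := by
    rw [hz0, Complex.norm_real, Real.norm_eq_abs, abs_of_pos (sub_pos.2 hε1)]
  have hz0_sub : ‖z 0 - 1‖ = ε := by
    simp only [hz0, Complex.ofReal_sub, Complex.ofReal_one, sub_sub_cancel_left, norm_neg,
      Complex.norm_real, Real.norm_eq_abs, abs_of_pos hε]
  refine ⟨z, mem_ball_zero_iff.2 ?_, ?_⟩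
  · have := normSqTail_add_norm_sq z
    rw [htail, hz0_norm] at this
    nlinarith [norm_nonneg z]
  · rw [htail, hz0_sub]
    nlinarith

end Slices

theorem slices_fill_open_set_general
    (n : ℕ) (hn : 2 ≤ n) [NeZero n] (R : ℝ) :
    (⋃ (α : Fin n → ℂ) (_ : R < Real.sqrt (normSqTail n α)),
        (Zslice n α ∩ ball (0 : EuclideanSpace ℂ (Fin n)) 1)) =
      ((⋃ (α : Fin n → ℂ) (_ : R < Real.sqrt (normSqTail n α)), Zslice n α) \
          {EuclideanSpace.single (0 : Fin n) (1 : ℂ)}) ∩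
        ball (0 : EuclideanSpace ℂ (Fin n)) 1 ∧
    (∃ U : Set (EuclideanSpace ℂ (Fin n)), IsOpen U ∧ U.Nonempty ∧
      U ⊆ ball (0 : EuclideanSpace ℂ (Fin n)) 1 ∧
      U ⊆ ⋃ (α : Fin n → ℂ) (_ : R < Real.sqrt (normSqTail n α)),
        (Zslice n α ∩ ball (0 : EuclideanSpace ℂ (Fin n)) 1)) ∧
    (∀ f g : EuclideanSpace ℂ (Fin n) → ℂ,
      DifferentiableOn ℂ f (ball (0 : EuclideanSpace ℂ (Fin n)) 1) →
      DifferentiableOn ℂ g (ball (0 : EuclideanSpace ℂ (Fin n)) 1) →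
      (∀ z ∈ ⋃ (α : Fin n → ℂ) (_ : R < Real.sqrt (normSqTail n α)),
        (Zslice n α ∩ ball (0 : EuclideanSpace ℂ (Fin n)) 1), f z = g z) →
      Set.EqOn f g (ball (0 : EuclideanSpace ℂ (Fin n)) 1)) := by
  set U := ball (0 : EuclideanSpace ℂ (Fin n)) 1 ∩
    {z | R ^ 2 * ‖z 0 - 1‖ ^ 2 < normSqTail n z}
  have hUopen : IsOpen U := isOpen_ball.inter (isOpen_setOf_sq_mul_lt_normSqTail R)
  obtain ⟨p, hp⟩ : U.Nonempty := exists_mem_ball_sq_mul_lt_normSqTail hn R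
  have hU :
      U ⊆ ⋃ (α : Fin n → ℂ) (_ : R < √(normSqTail n α)), Zslice n α ∩ ball 0 1 := by
    rintro z ⟨hz, hzR⟩
    rw [← Set.iUnion₂_inter]
    exact ⟨mem_iUnion_Zslice (apply_zero_ne_one_of_mem_ball hz) hzR, hz⟩
  refine ⟨Set.iUnion₂_inter_eq_diff_singleton_inter _ (by simp),
    ⟨U, hUopen, ⟨p, hp⟩, Set.inter_subset_left, hU⟩, fun f g hf hg hfg => ?_⟩
  exact hf.eqOn_of_convex_of_eventuallyEq hg isOpen_ball (convex_ball 0 1) hp.1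
    (eventually_of_mem (hUopen.mem_nhds hp) fun z hz => hfg z (hU hz))

/-- **The slices fill an open set.** For `n ≥ 2` and `R > 0`, one has
`⋃_{|α| > R} (Z_α ∩ B^n) = ((⋃_{|α| > R} Z_α) \ {𝟙}) ∩ B^n`; this set contains a
nonempty open subset of `B^n`, and consequently two holomorphic functions on `B^n`
agreeing on it agree on all of `B^n`. -/
theorem slices_fill_open_set
    (n : ℕ) (hn : 2 ≤ n) [NeZero n] (R : ℝ) (hR : 0 < R) :
    (⋃ (α : Fin n → ℂ) (_ : R < Real.sqrt (normSqTail n α)),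
        (Zslice n α ∩ ball (0 : EuclideanSpace ℂ (Fin n)) 1)) =
      ((⋃ (α : Fin n → ℂ) (_ : R < Real.sqrt (normSqTail n α)), Zslice n α) \
          {EuclideanSpace.single (0 : Fin n) (1 : ℂ)}) ∩
        ball (0 : EuclideanSpace ℂ (Fin n)) 1 ∧
    (∃ U : Set (EuclideanSpace ℂ (Fin n)), IsOpen U ∧ U.Nonempty ∧
      U ⊆ ball (0 : EuclideanSpace ℂ (Fin n)) 1 ∧
      U ⊆ ⋃ (α : Fin n → ℂ) (_ : R < Real.sqrt (normSqTail n α)),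
        (Zslice n α ∩ ball (0 : EuclideanSpace ℂ (Fin n)) 1)) ∧
    (∀ f g : EuclideanSpace ℂ (Fin n) → ℂ,
      DifferentiableOn ℂ f (ball (0 : EuclideanSpace ℂ (Fin n)) 1) →
      DifferentiableOn ℂ g (ball (0 : EuclideanSpace ℂ (Fin n)) 1) →
      (∀ z ∈ ⋃ (α : Fin n → ℂ) (_ : R < Real.sqrt (normSqTail n α)),
        (Zslice n α ∩ ball (0 : EuclideanSpace ℂ (Fin n)) 1), f z = g z) →
      Set.EqOn f g (ball (0 : EuclideanSpace ℂ (Fin n)) 1)) :=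
  slices_fill_open_set_general n hn R
end
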